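/- arXiv:2211.11666 — 8 statements merged into one kernel-verified Lean document; each statement's English description precedes it below -/
import Mathlib

section
/- Define α_q(a,b;c,d) = [a choose c]_q [b choose d]_q q^((a-c)(b-d)) and β_q(a,b;c,d) = (-1)^((a-c)+(b-d)) [a choose c]_q [b choose d]_q q^(binom(|((a-c)-(b-d))|, 2)) (1 + q^|(a-c)-(b-d)| - q^max(a-c, b-d)). Then for all nonnegative integers a, b, e, f: ∑_{c=0}^{a} ∑_{d=0}^{b} α_q(a,b;c,d) β_q(c,d;e,f) = 1 if (a,b) = (e,f) and 0 otherwise. -/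
/-- The Gaussian ($q$-)binomial coefficient, defined by the $q$-Pascal recursion
`[n+1, k+1] = [n, k] + q^(k+1) * [n, k+1]`, which agrees with
`[n]_q! / ([n-k]_q! [k]_q!)` for `k ≤ n` and is `0` for `k > n`. -/
def gaussBinom {R : Type*} [CommSemiring R] (q : R) : ℕ → ℕ → R
  | _, 0 => 1
  | 0, _ + 1 => 0
  | n + 1, k + 1 => gaussBinom q n k + q ^ (k + 1) * gaussBinom q n (k + 1)

/-- The transformation . -/
def alphaq {R : Type*} [CommSemiring R] (q : R) (a b c d : ℕ) : R :=
  gaussBinom q a c * gaussBinom q b d * q ^ ((a - c) * (b - d))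

/-- The transformation . -/
def betaq {R : Type*} [CommRing R] (q : R) (a b c d : ℕ) : R :=
  (-1 : R) ^ ((a - c) + (b - d)) * gaussBinom q a c * gaussBinom q b d *
    q ^ (Nat.choose (((a - c : ℕ) : ℤ) - ((b - d : ℕ) : ℤ)).natAbs 2) *
    (1 + q ^ (((a - c : ℕ) : ℤ) - ((b - d : ℕ) : ℤ)).natAbs - q ^ (max (a - c) (b - d)))

namespace AlphaBetaAux

open Finset Polynomial

/-! ### Basic facts about `gaussBinom` -/

section Basic
variable {R : Type*} [CommSemiring R] (q : R)

@[simp] lemma gaussBinom_zero_right : ∀ n, gaussBinom q n 0 = 1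
  | 0 => rfl
  | _+1 => rfl

lemma gaussBinom_succ (n k : ℕ) : gaussBinom q (n+1) (k+1)
    = gaussBinom q n k + q ^ (k+1) * gaussBinom q n (k+1) := rfl

lemma gaussBinom_eq_zero : ∀ {n k : ℕ}, n < k → gaussBinom q n k = 0
  | 0, _+1, _ => rfl
  | n+1, k+1, h => by
      rw [gaussBinom_succ, gaussBinom_eq_zero (by omega), gaussBinom_eq_zero (by omega)]
      ring

@[simp] lemma gaussBinom_self : ∀ n, gaussBinom q n n = 1
  | 0 => rfl
  | n+1 => by
      rw [gaussBinom_succ, gaussBinom_self n, gaussBinom_eq_zero q (by omega)]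
      ring

/-- The `q`-factorial. -/
def qfact : ℕ → R
  | 0 => 1
  | n+1 => qfact n * ∑ i ∈ range (n+1), q ^ i

lemma geom_add (a b : ℕ) :
    (∑ i ∈ range a, q ^ i) + q ^ a * ∑ i ∈ range b, q ^ i = ∑ i ∈ range (a+b), q ^ i := by
  rw [Finset.sum_range_add, Finset.mul_sum]
  congr 1
  exact Finset.sum_congr rfl fun i _ => by rw [pow_add]

lemma qfact_mul_gauss : ∀ n k : ℕ, k ≤ n →
    qfact q k * qfact q (n-k) * gaussBinom q n k = qfact q n
  | 0, 0, _ => by simp [qfact]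
  | n+1, 0, _ => by simp [qfact]
  | n+1, k+1, h => by
      rcases Nat.lt_or_ge k n with hk | hk
      · rw [gaussBinom_succ, mul_add]
        have h1 := qfact_mul_gauss n k (by omega)
        have h2 := qfact_mul_gauss n (k+1) (by omega)
        have e1 : n + 1 - (k+1) = n - k := by omega
        have e2 : n - k = (n - (k+1)) + 1 := by omega
        have key : qfact q (k+1) * qfact q (n-k) * gaussBinom q n k
            + qfact q (k+1) * qfact q (n-k) * (q^(k+1) * gaussBinom q n (k+1))
            = qfact q (n+1) := by
          have lhs1 : qfact q (k+1) * qfact q (n-k) * gaussBinom q n k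
              = (∑ i ∈ range (k+1), q ^ i) * qfact q n := by
            show qfact q k * _ * _ * _ = _
            rw [← h1]; ring
          have lhs2 : qfact q (k+1) * qfact q (n-k) * (q^(k+1) * gaussBinom q n (k+1))
              = q^(k+1) * (∑ i ∈ range (n-k), q ^ i) * qfact q n := by
            rw [e2]
            show _ * (qfact q (n-(k+1)) * _) * _ = _
            rw [← h2]; ring
          rw [lhs1, lhs2, show qfact q (n+1) = qfact q n * ∑ i ∈ range (n+1), q^i from rfl,
            show n+1 = (k+1) + (n-k) by omega, ← geom_add q (k+1) (n-k)]
          ring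
        rw [e1, key]
      · have : k = n := by omega
        subst this
        simp [gaussBinom_self, qfact]

end Basic

/-! ### Arithmetic helper lemmas -/

lemma choose_two_succ (u : ℕ) : (u+1).choose 2 = u.choose 2 + u := by
  rw [Nat.choose_succ_succ]
  simp [Nat.choose_one_right]; omega

lemma two_mul_choose_two : ∀ k : ℕ, 2 * k.choose 2 + k = k * k
  | 0 => rfl
  | k+1 => by
      have IH := two_mul_choose_two k
      rw [choose_two_succ]
      zify at IH ⊢
      linear_combination IH

lemma choose_two_add (a : ℕ) : ∀ b : ℕ, (a+b).choose 2 = a.choose 2 + b.choose 2 + a*b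
  | 0 => by simp
  | b+1 => by
      have IH := choose_two_add a b
      rw [show a + (b+1) = (a+b)+1 by omega, choose_two_succ, choose_two_succ, IH]
      ring

/-! ### The (homogeneous) Gauss identity -/

lemma gauss_sum {R : Type*} [CommRing R] (q : R) :
    ∀ (m : ℕ) (x y : R), ∑ u ∈ range (m+1),
      (-1:R)^u * gaussBinom q m u * q^(u.choose 2) * x^u * y^(m-u)
      = ∏ k ∈ range m, (y - q^k * x)
  | 0, x, y => by simp
  | m+1, x, y => by
    have IH := gauss_sum q m (q*x) y
    set p : ℕ → R := fun t => (-1:R)^t * gaussBinom q m t * q^(t.choose 2) * (q*x)^t * y^(m-t)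
      with hp
    have hsplit : ∀ u ∈ range (m+1),
        (-1:R)^(u+1) * gaussBinom q (m+1) (u+1) * q^((u+1).choose 2) * x^(u+1) * y^(m+1-(u+1))
        = (-x) * p u
          + ((-1:R)^(u+1) * (q^(u+1) * gaussBinom q m (u+1)) * q^((u+1).choose 2) * x^(u+1) * y^(m-u)) := by
      intro u _
      rw [hp, gaussBinom_succ, choose_two_succ]
      simp only [Nat.succ_sub_succ, pow_succ, pow_add, mul_pow]
      ring
    rw [Finset.sum_range_succ', Finset.sum_congr rfl hsplit, Finset.sum_add_distrib,
      ← Finset.mul_sum, IH, add_assoc]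
    have hB : (∑ u ∈ range (m+1),
        (-1:R)^(u+1) * (q^(u+1) * gaussBinom q m (u+1)) * q^((u+1).choose 2) * x^(u+1) * y^(m-u))
        + ((-1:R)^0 * gaussBinom q (m+1) 0 * q^((0:ℕ).choose 2) * x^0 * y^(m+1-0))
        = y * ∏ k ∈ range m, (y - q^k * (q*x)) := by
      rw [← IH, Finset.sum_range_succ,
        gaussBinom_eq_zero q (show m < m + 1 by omega)]
      have hpt : ∀ u ∈ range m,
          (-1:R)^(u+1) * (q^(u+1) * gaussBinom q m (u+1)) * q^((u+1).choose 2) * x^(u+1) * y^(m-u)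
          = y * p (u+1) := by
        intro u hu
        rw [hp]
        rw [show m - u = (m - (u+1)) + 1 by have := mem_range.mp hu; omega]
        simp only [pow_succ, mul_pow]
        ring
      rw [Finset.sum_congr rfl hpt, ← Finset.mul_sum]
      have hf0 : ((-1:R)^0 * gaussBinom q (m+1) 0 * q^((0:ℕ).choose 2) * x^0 * y^(m+1-0))
          = y * p 0 := by
        rw [hp]; simp [pow_succ]; ring
      rw [hf0, show (range (m+1)).sum p = ∑ i ∈ range m, p (i+1) + p 0 from Finset.sum_range_succ' p m]
      ring
    rw [hB]
    have hprod : ∀ k ∈ range m, (y - q^k * (q*x)) = (y - q^(k+1) * x) := by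
      intro k _; rw [pow_succ]; ring
    rw [Finset.prod_congr rfl hprod, Finset.prod_range_succ']
    simp
    ring

/-! ### Trinomial revision in `ℤ[X]` -/

lemma qfact_ne_zero : ∀ n : ℕ, qfact (X : ℤ[X]) n ≠ 0
  | 0 => one_ne_zero
  | n+1 => by
      show qfact (X : ℤ[X]) n * _ ≠ 0
      refine mul_ne_zero (qfact_ne_zero n) (fun h => ?_)
      have := congrArg (Polynomial.eval 1) h
      simp [Polynomial.eval_finset_sum] at this
      omega

lemma trinom {e c a : ℕ} (hce : e ≤ c) (hca : c ≤ a) :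
    gaussBinom (X:ℤ[X]) a c * gaussBinom (X:ℤ[X]) c e
      = gaussBinom (X:ℤ[X]) a e * gaussBinom (X:ℤ[X]) (a-e) (c-e) := by
  have hM : qfact (X:ℤ[X]) e * qfact (X:ℤ[X]) (c-e) * qfact (X:ℤ[X]) (a-c) ≠ 0 :=
    mul_ne_zero (mul_ne_zero (qfact_ne_zero e) (qfact_ne_zero _)) (qfact_ne_zero _)
  apply mul_right_cancel₀ hM
  have h1 := qfact_mul_gauss (X:ℤ[X]) c e hce
  have h2 := qfact_mul_gauss (X:ℤ[X]) a c hca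
  have h3 := qfact_mul_gauss (X:ℤ[X]) (a-e) (c-e) (by omega)
  have h4 := qfact_mul_gauss (X:ℤ[X]) a e (by omega)
  rw [show (a-e)-(c-e) = a - c by omega] at h3
  calc gaussBinom (X:ℤ[X]) a c * gaussBinom (X:ℤ[X]) c e
        * (qfact (X:ℤ[X]) e * qfact (X:ℤ[X]) (c-e) * qfact (X:ℤ[X]) (a-c))
      = (qfact (X:ℤ[X]) e * qfact (X:ℤ[X]) (c-e) * gaussBinom (X:ℤ[X]) c e)
          * qfact (X:ℤ[X]) (a-c) * gaussBinom (X:ℤ[X]) a c := by ring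
    _ = qfact (X:ℤ[X]) c * qfact (X:ℤ[X]) (a-c) * gaussBinom (X:ℤ[X]) a c := by rw [h1]
    _ = qfact (X:ℤ[X]) a := h2
    _ = qfact (X:ℤ[X]) e * qfact (X:ℤ[X]) (a-e) * gaussBinom (X:ℤ[X]) a e := h4.symm
    _ = (qfact (X:ℤ[X]) (c-e) * qfact (X:ℤ[X]) (a-c) * gaussBinom (X:ℤ[X]) (a-e) (c-e))
          * qfact (X:ℤ[X]) e * gaussBinom (X:ℤ[X]) a e := by rw [h3]; ring
    _ = gaussBinom (X:ℤ[X]) a e * gaussBinom (X:ℤ[X]) (a-e) (c-e)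
          * (qfact (X:ℤ[X]) e * qfact (X:ℤ[X]) (c-e) * qfact (X:ℤ[X]) (a-c)) := by ring

/-! ### The key double-sum computation -/

lemma pointwise {R : Type*} [CommRing R] (q : R) {m n u v : ℕ} (hu : u ≤ m) (hv : v ≤ n) :
    q^(u*n) * (q^((m-u)*(n-v) + (((u:ℤ)-(v:ℤ)).natAbs.choose 2)) *
      (1 + q^((((u:ℤ)-(v:ℤ)).natAbs)) - q^(max u v)))
    = q^(u.choose 2 + u) * ((q^m)^(n-v) * q^(v.choose 2))
      + (q^(u.choose 2) - q^(u.choose 2 + u)) * ((q^m)^(n-v) * q^(v.choose 2) * q^v) := by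
  rcases le_total u v with h | h
  · obtain ⟨s, rfl⟩ : ∃ s, v = u + s := ⟨v - u, by omega⟩
    have hs : (((u:ℤ) - ((u+s:ℕ):ℤ))).natAbs = s := by omega
    have h2u := two_mul_choose_two u
    have e1 : u*n + ((m-u)*(n-(u+s)) + s.choose 2)
        = u.choose 2 + (m*(n-(u+s))) + (u+s).choose 2 + u := by
      rw [choose_two_add]
      zify [hu, hv] at h2u ⊢
      linear_combination -h2u
    rw [hs, Nat.max_eq_right (by omega : u ≤ u + s)]
    calc q^(u*n) * (q^((m-u)*(n-(u+s)) + s.choose 2) * (1 + q^s - q^(u+s)))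
        = q^(u*n + ((m-u)*(n-(u+s)) + s.choose 2)) * (1 + q^s - q^(u+s)) := by
          simp only [pow_add] <;> ring
      _ = q^(u.choose 2) * q^(m*(n-(u+s))) * q^((u+s).choose 2) * q^u * (1 + q^s - (q^u * q^s)) := by
          rw [e1]; simp only [pow_add] <;> ring
      _ = _ := by
          simp only [← pow_mul, pow_add] <;> ring
  · obtain ⟨s, rfl⟩ : ∃ s, u = v + s := ⟨u - v, by omega⟩
    have hs : ((((v+s:ℕ):ℤ) - (v:ℤ))).natAbs = s := by omega
    have h2v := two_mul_choose_two v
    have e1 : (v+s)*n + ((m-(v+s))*(n-v) + s.choose 2)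
        = (v+s).choose 2 + (m*(n-v)) + v.choose 2 + v := by
      rw [choose_two_add]
      zify [hu, hv] at h2v ⊢
      linear_combination -h2v
    rw [hs, Nat.max_eq_left (by omega : v ≤ v + s)]
    calc q^((v+s)*n) * (q^((m-(v+s))*(n-v) + s.choose 2) * (1 + q^s - q^(v+s)))
        = q^((v+s)*n + ((m-(v+s))*(n-v) + s.choose 2)) * (1 + q^s - (q^v * q^s)) := by
          simp only [pow_add] <;> ring
      _ = q^((v+s).choose 2) * q^(m*(n-v)) * q^(v.choose 2) * q^v * (1 + q^s - (q^v * q^s)) := by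
          rw [e1]; simp only [pow_add] <;> ring
      _ = _ := by
          simp only [← pow_mul, pow_add] <;> ring

lemma innerSumW {R : Type*} [CommRing R] (q : R) (m n u : ℕ) (hu : u ≤ m) :
    q^(u*n) * ∑ v ∈ range (n+1), (-1:R)^v * gaussBinom q n v *
      (q^((m-u)*(n-v) + (((u:ℤ)-(v:ℤ)).natAbs.choose 2)) *
        (1 + q^(((u:ℤ)-(v:ℤ)).natAbs) - q^(max u v)))
    = q^(u.choose 2 + u) * ∏ k ∈ range n, (q^m - q^k * 1)
      + (q^(u.choose 2) - q^(u.choose 2 + u)) * ∏ k ∈ range n, (q^m - q^k * q) := by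
  rw [Finset.mul_sum]
  have key : ∀ v ∈ range (n+1),
      q^(u*n) * ((-1:R)^v * gaussBinom q n v *
        (q^((m-u)*(n-v) + (((u:ℤ)-(v:ℤ)).natAbs.choose 2)) *
          (1 + q^(((u:ℤ)-(v:ℤ)).natAbs) - q^(max u v))))
      = q^(u.choose 2 + u) * ((-1:R)^v * gaussBinom q n v * q^(v.choose 2) * 1^v * (q^m)^(n-v))
        + (q^(u.choose 2) - q^(u.choose 2 + u))
            * ((-1:R)^v * gaussBinom q n v * q^(v.choose 2) * q^v * (q^m)^(n-v)) := by
    intro v hv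
    have hv' : v ≤ n := by have := mem_range.mp hv; omega
    calc q^(u*n) * ((-1:R)^v * gaussBinom q n v *
          (q^((m-u)*(n-v) + (((u:ℤ)-(v:ℤ)).natAbs.choose 2)) *
            (1 + q^(((u:ℤ)-(v:ℤ)).natAbs) - q^(max u v))))
        = (-1:R)^v * gaussBinom q n v *
            (q^(u*n) * (q^((m-u)*(n-v) + (((u:ℤ)-(v:ℤ)).natAbs.choose 2)) *
              (1 + q^(((u:ℤ)-(v:ℤ)).natAbs) - q^(max u v)))) := by ring
      _ = _ := by rw [pointwise q hu hv']; ring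
  rw [Finset.sum_congr rfl key, Finset.sum_add_distrib, ← Finset.mul_sum, ← Finset.mul_sum,
    gauss_sum q n 1 (q^m), gauss_sum q n q (q^m)]

lemma key_qpow {R : Type*} [CommRing R] (q : R) (m n : ℕ) :
    q^(m*n) * ∑ u ∈ range (m+1), ∑ v ∈ range (n+1),
      (-1:R)^(u+v) * gaussBinom q m u * gaussBinom q n v *
        q^((m-u)*(n-v) + (((u:ℤ)-(v:ℤ)).natAbs.choose 2)) *
        (1 + q^(((u:ℤ)-(v:ℤ)).natAbs) - q^(max u v))
    = (∏ k ∈ range n, (q^m - q^k * 1)) * ∏ k ∈ range m, (q^n - q^k * q)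
      + (∏ k ∈ range n, (q^m - q^k * q)) * ∏ k ∈ range m, (q^n - q^k * 1)
      - (∏ k ∈ range n, (q^m - q^k * q)) * ∏ k ∈ range m, (q^n - q^k * q) := by
  rw [Finset.mul_sum]
  have step : ∀ u ∈ range (m+1),
      q^(m*n) * ∑ v ∈ range (n+1),
        (-1:R)^(u+v) * gaussBinom q m u * gaussBinom q n v *
          q^((m-u)*(n-v) + (((u:ℤ)-(v:ℤ)).natAbs.choose 2)) *
          (1 + q^(((u:ℤ)-(v:ℤ)).natAbs) - q^(max u v))
      = (∏ k ∈ range n, (q^m - q^k * 1))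
          * ((-1:R)^u * gaussBinom q m u * q^(u.choose 2) * q^u * (q^n)^(m-u))
        + ((∏ k ∈ range n, (q^m - q^k * q))
          * ((-1:R)^u * gaussBinom q m u * q^(u.choose 2) * 1^u * (q^n)^(m-u))
        - (∏ k ∈ range n, (q^m - q^k * q))
          * ((-1:R)^u * gaussBinom q m u * q^(u.choose 2) * q^u * (q^n)^(m-u))) := by
    intro u hu
    have hu' : u ≤ m := by have := mem_range.mp hu; omega
    have hsplit : q^(m*n) = (q^n)^(m-u) * q^(u*n) := by
      rw [← pow_mul, ← pow_add]
      congr 1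
      obtain ⟨t, rfl⟩ : ∃ t, m = u + t := ⟨m-u, by omega⟩
      rw [Nat.add_sub_cancel_left]
      ring
    have pull : (∑ v ∈ range (n+1),
        (-1:R)^(u+v) * gaussBinom q m u * gaussBinom q n v *
          q^((m-u)*(n-v) + (((u:ℤ)-(v:ℤ)).natAbs.choose 2)) *
          (1 + q^(((u:ℤ)-(v:ℤ)).natAbs) - q^(max u v)))
        = ((-1:R)^u * gaussBinom q m u) * ∑ v ∈ range (n+1),
            (-1:R)^v * gaussBinom q n v *
              (q^((m-u)*(n-v) + (((u:ℤ)-(v:ℤ)).natAbs.choose 2)) *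
                (1 + q^(((u:ℤ)-(v:ℤ)).natAbs) - q^(max u v))) := by
      rw [Finset.mul_sum]
      refine Finset.sum_congr rfl fun v _ => ?_
      rw [pow_add]
      ring
    have hinner := innerSumW q m n u hu'
    set S : R := ∑ v ∈ range (n+1),
        (-1:R)^v * gaussBinom q n v *
          (q^((m-u)*(n-v) + (((u:ℤ)-(v:ℤ)).natAbs.choose 2)) *
            (1 + q^(((u:ℤ)-(v:ℤ)).natAbs) - q^(max u v))) with hSdef
    rw [pull, hsplit]
    have h3 : ((q^n)^(m-u) * q^(u*n)) * (((-1:R)^u * gaussBinom q m u) * S)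
        = ((-1:R)^u * gaussBinom q m u) * (q^n)^(m-u) * (q^(u*n) * S) := by ring
    rw [h3, hinner]
    ring
  rw [Finset.sum_congr rfl step, Finset.sum_add_distrib, Finset.sum_sub_distrib,
    ← Finset.mul_sum, ← Finset.mul_sum, ← Finset.mul_sum,
    gauss_sum q m q (q^n), gauss_sum q m 1 (q^n)]
  ring

lemma rhs_val {R : Type*} [CommRing R] (q : R) (m n : ℕ) :
    (∏ k ∈ range n, (q^m - q^k * 1)) * ∏ k ∈ range m, (q^n - q^k * q)
      + (∏ k ∈ range n, (q^m - q^k * q)) * ∏ k ∈ range m, (q^n - q^k * 1)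
      - (∏ k ∈ range n, (q^m - q^k * q)) * ∏ k ∈ range m, (q^n - q^k * q)
    = if m = 0 ∧ n = 0 then 1 else 0 := by
  rcases Nat.eq_zero_or_pos m with hm | hm
  · subst hm
    rcases Nat.eq_zero_or_pos n with hn | hn
    · subst hn; simp
    · have hS1 : (∏ k ∈ range n, ((q:R)^(0:ℕ) - q^k * 1)) = 0 :=
        Finset.prod_eq_zero (mem_range.mpr hn) (by simp)
      rw [if_neg (by omega), hS1]
      simp
  · rcases Nat.eq_zero_or_pos n with hn | hn
    · subst hn
      have hT0 : (∏ k ∈ range m, ((q:R)^(0:ℕ) - q^k * 1)) = 0 :=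
        Finset.prod_eq_zero (mem_range.mpr hm) (by simp)
      rw [if_neg (by omega), hT0]
      simp
    · rw [if_neg (by omega)]
      have hS2 : m ≤ n → (∏ k ∈ range n, ((q:R)^m - q^k * q)) = 0 := fun h =>
        Finset.prod_eq_zero (i := m-1) (mem_range.mpr (by omega))
          (by rw [← pow_succ, show m-1+1 = m by omega]; ring)
      have hT1 : n ≤ m → (∏ k ∈ range m, ((q:R)^n - q^k * q)) = 0 := fun h =>
        Finset.prod_eq_zero (i := n-1) (mem_range.mpr (by omega))
          (by rw [← pow_succ, show n-1+1 = n by omega]; ring)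
      rcases lt_trichotomy m n with h | h | h
      · have hS1 : (∏ k ∈ range n, ((q:R)^m - q^k * 1)) = 0 :=
          Finset.prod_eq_zero (mem_range.mpr h) (by simp)
        rw [hS1, hS2 (by omega)]
        ring
      · rw [hS2 (by omega), hT1 (by omega)]
        ring
      · have hT0 : (∏ k ∈ range m, ((q:R)^n - q^k * 1)) = 0 :=
          Finset.prod_eq_zero (mem_range.mpr h) (by simp)
        rw [hT0, hT1 (by omega)]
        ring

lemma key_T (m n : ℕ) :
    ∑ u ∈ range (m+1), ∑ v ∈ range (n+1),
      (-1:ℤ[X])^(u+v) * gaussBinom (X:ℤ[X]) m u * gaussBinom (X:ℤ[X]) n v *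
        (X:ℤ[X])^((m-u)*(n-v) + (((u:ℤ)-(v:ℤ)).natAbs.choose 2)) *
        (1 + (X:ℤ[X])^(((u:ℤ)-(v:ℤ)).natAbs) - (X:ℤ[X])^(max u v))
    = if m = 0 ∧ n = 0 then 1 else 0 := by
  have h := key_qpow (X : ℤ[X]) m n
  rw [rhs_val (X:ℤ[X]) m n] at h
  apply mul_left_cancel₀ (pow_ne_zero (m*n) (Polynomial.X_ne_zero (R := ℤ)))
  rw [h]
  split_ifs with hc
  · obtain ⟨h1, h2⟩ := hc
    subst h1; subst h2
    simp
  · simp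

/-! ### The theorem for `ℤ[X]` -/

lemma main_poly (a b e f : ℕ) :
    ∑ c ∈ range (a+1), ∑ d ∈ range (b+1),
      alphaq (X:ℤ[X]) a b c d * betaq (X:ℤ[X]) c d e f
    = if a = e ∧ b = f then 1 else 0 := by
  by_cases hea : e ≤ a
  swap
  · rw [if_neg (by omega)]
    refine Finset.sum_eq_zero fun c hc => Finset.sum_eq_zero fun d _ => ?_
    have hz : gaussBinom (X:ℤ[X]) c e = 0 :=
      gaussBinom_eq_zero _ (by have := mem_range.mp hc; omega)
    simp [betaq, hz]
  by_cases hfb : f ≤ b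
  swap
  · rw [if_neg (by omega)]
    refine Finset.sum_eq_zero fun c _ => Finset.sum_eq_zero fun d hd => ?_
    have hz : gaussBinom (X:ℤ[X]) d f = 0 :=
      gaussBinom_eq_zero _ (by have := mem_range.mp hd; omega)
    simp [betaq, hz]
  have inner_restrict : ∀ c, ∑ d ∈ range (b+1), alphaq (X:ℤ[X]) a b c d * betaq (X:ℤ[X]) c d e f
      = ∑ v ∈ range ((b-f)+1), alphaq (X:ℤ[X]) a b c (f+v) * betaq (X:ℤ[X]) c (f+v) e f := by
    intro c
    have h : (∑ d ∈ Ico f (b+1), alphaq (X:ℤ[X]) a b c d * betaq (X:ℤ[X]) c d e f)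
        = ∑ d ∈ range (b+1), alphaq (X:ℤ[X]) a b c d * betaq (X:ℤ[X]) c d e f := by
      refine Finset.sum_subset (fun x hx => mem_range.mpr (mem_Ico.mp hx).2)
        (fun d hd hnd => ?_)
      have hz : gaussBinom (X:ℤ[X]) d f = 0 := by
        refine gaussBinom_eq_zero _ ?_
        simp only [mem_range] at hd
        simp only [mem_Ico, not_and, not_lt] at hnd
        omega
      simp [betaq, hz]
    rw [← h, Finset.sum_Ico_eq_sum_range, show (b+1)-f = (b-f)+1 by omega]
  have outer_restrict : ∑ c ∈ range (a+1),
        (∑ d ∈ range (b+1), alphaq (X:ℤ[X]) a b c d * betaq (X:ℤ[X]) c d e f)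
      = ∑ u ∈ range ((a-e)+1),
        (∑ d ∈ range (b+1), alphaq (X:ℤ[X]) a b (e+u) d * betaq (X:ℤ[X]) (e+u) d e f) := by
    have h : (∑ c ∈ Ico e (a+1), ∑ d ∈ range (b+1),
          alphaq (X:ℤ[X]) a b c d * betaq (X:ℤ[X]) c d e f)
        = ∑ c ∈ range (a+1), ∑ d ∈ range (b+1),
          alphaq (X:ℤ[X]) a b c d * betaq (X:ℤ[X]) c d e f := by
      refine Finset.sum_subset (fun x hx => mem_range.mpr (mem_Ico.mp hx).2)
        (fun c hc hnc => Finset.sum_eq_zero fun d _ => ?_)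
      have hz : gaussBinom (X:ℤ[X]) c e = 0 := by
        refine gaussBinom_eq_zero _ ?_
        simp only [mem_range] at hc
        simp only [mem_Ico, not_and, not_lt] at hnc
        omega
      simp [betaq, hz]
    rw [← h, Finset.sum_Ico_eq_sum_range, show (a+1)-e = (a-e)+1 by omega]
  have point : ∀ u ∈ range ((a-e)+1), ∀ v ∈ range ((b-f)+1),
      alphaq (X:ℤ[X]) a b (e+u) (f+v) * betaq (X:ℤ[X]) (e+u) (f+v) e f
      = gaussBinom (X:ℤ[X]) a e * gaussBinom (X:ℤ[X]) b f *
          ((-1:ℤ[X])^(u+v) * gaussBinom (X:ℤ[X]) (a-e) u * gaussBinom (X:ℤ[X]) (b-f) v *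
            (X:ℤ[X])^(((a-e)-u)*((b-f)-v) + (((u:ℤ)-(v:ℤ)).natAbs.choose 2)) *
            (1 + (X:ℤ[X])^(((u:ℤ)-(v:ℤ)).natAbs) - (X:ℤ[X])^(max u v))) := by
    intro u hu v hv
    have hum : u ≤ a - e := by have := mem_range.mp hu; omega
    have hvn : v ≤ b - f := by have := mem_range.mp hv; omega
    have t1 := trinom (show e ≤ e+u by omega) (show e+u ≤ a by omega)
    rw [show e+u-e = u by omega] at t1
    have t2 := trinom (show f ≤ f+v by omega) (show f+v ≤ b by omega)
    rw [show f+v-f = v by omega] at t2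
    unfold alphaq betaq
    rw [show a - (e+u) = (a-e) - u by omega, show b - (f+v) = (b-f) - v by omega,
      show e+u-e = u by omega, show f+v-f = v by omega]
    calc gaussBinom (X:ℤ[X]) a (e+u) * gaussBinom (X:ℤ[X]) b (f+v)
          * (X:ℤ[X])^(((a-e)-u)*((b-f)-v)) *
        ((-1:ℤ[X])^(u+v) * gaussBinom (X:ℤ[X]) (e+u) e * gaussBinom (X:ℤ[X]) (f+v) f *
          (X:ℤ[X])^((((u:ℤ)-(v:ℤ)).natAbs).choose 2) *
          (1 + (X:ℤ[X])^(((u:ℤ)-(v:ℤ)).natAbs) - (X:ℤ[X])^(max u v)))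
        = (gaussBinom (X:ℤ[X]) a (e+u) * gaussBinom (X:ℤ[X]) (e+u) e)
          * (gaussBinom (X:ℤ[X]) b (f+v) * gaussBinom (X:ℤ[X]) (f+v) f)
          * ((-1:ℤ[X])^(u+v) * (X:ℤ[X])^(((a-e)-u)*((b-f)-v)) *
            (X:ℤ[X])^((((u:ℤ)-(v:ℤ)).natAbs).choose 2) *
            (1 + (X:ℤ[X])^(((u:ℤ)-(v:ℤ)).natAbs) - (X:ℤ[X])^(max u v))) := by ring
      _ = _ := by rw [t1, t2, pow_add]; ring
  rw [outer_restrict]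
  rw [Finset.sum_congr rfl (fun u _ => inner_restrict (e+u))]
  rw [Finset.sum_congr rfl (fun u hu => Finset.sum_congr rfl (fun v hv => point u hu v hv))]
  simp only [← Finset.mul_sum]
  rw [key_T (a-e) (b-f)]
  by_cases hc : a = e ∧ b = f
  · obtain ⟨rfl, rfl⟩ := hc
    simp
  · rw [if_neg (by omega), if_neg hc]
    ring

/-! ### Transfer to an arbitrary commutative ring -/

section transfer
variable {R : Type*} {S : Type*}

lemma gaussBinom_map [CommSemiring R] [CommSemiring S] (φ : R →+* S) (q : R) :
    ∀ n k, φ (gaussBinom q n k) = gaussBinom (φ q) n k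
  | n, 0 => by simp
  | 0, k+1 => by
      rw [show gaussBinom q 0 (k+1) = 0 from rfl, show gaussBinom (φ q) 0 (k+1) = 0 from rfl,
        map_zero]
  | n+1, k+1 => by
      rw [gaussBinom_succ, gaussBinom_succ, map_add, map_mul, map_pow,
        gaussBinom_map φ q n k, gaussBinom_map φ q n (k+1)]

lemma alphaq_map [CommSemiring R] [CommSemiring S] (φ : R →+* S) (q : R) (a b c d : ℕ) :
    φ (alphaq q a b c d) = alphaq (φ q) a b c d := by
  simp [alphaq, map_mul, map_pow, gaussBinom_map]

lemma betaq_map [CommRing R] [CommRing S] (φ : R →+* S) (q : R) (a b c d : ℕ) :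
    φ (betaq q a b c d) = betaq (φ q) a b c d := by
  simp only [betaq, map_mul, map_pow, map_sub, map_add, map_one, map_neg, gaussBinom_map]

end transfer

end AlphaBetaAux

open Finset Polynomial AlphaBetaAux in
/--  and  are mutually inverse transformations. -/
theorem alphaq_betaq_inverse {R : Type*} [CommRing R] (q : R) (a b e f : ℕ) :
    ∑ c ∈ Finset.range (a + 1), ∑ d ∈ Finset.range (b + 1),
        alphaq q a b c d * betaq q c d e f =
      if a = e ∧ b = f then 1 else 0 := by
  let ψ : ℤ[X] →+* R := (Polynomial.aeval q : ℤ[X] →ₐ[ℤ] R).toRingHom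
  have hψX : ψ X = q := by simp [ψ]
  have h1 : ψ (∑ c ∈ range (a+1), ∑ d ∈ range (b+1),
      alphaq (X:ℤ[X]) a b c d * betaq (X:ℤ[X]) c d e f)
      = ∑ c ∈ Finset.range (a + 1), ∑ d ∈ Finset.range (b + 1),
        alphaq q a b c d * betaq q c d e f := by
    rw [map_sum]
    refine Finset.sum_congr rfl fun c _ => ?_
    rw [map_sum]
    refine Finset.sum_congr rfl fun d _ => ?_
    rw [map_mul, alphaq_map, betaq_map, hψX]
  rw [← h1, main_poly a b e f]
  split_ifs <;> simp
end

section
/- Let q be an indeterminate and for nonnegative integers a, b define N_{i,j}(a,b) = (-1)^(i+j) [a choose i]_q [b choose j]_q q^((a-i)(b-j)) q^(binom(|i-j|,2)) (1 + q^|i-j| - q^max(i,j)). Then ∑_{i=0}^{a} ∑_{j=0}^{b} N_{i,j}(a,b) = 1 if a = b = 0 and 0 otherwise. -/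
/-- The quantity . -/
def Nq {R : Type*} [CommRing R] (q : R) (i j a b : ℕ) : R :=
  (-1 : R) ^ (i + j) * gaussBinom q a i * gaussBinom q b j * q ^ ((a - i) * (b - j)) *
    q ^ (Nat.choose ((i : ℤ) - (j : ℤ)).natAbs 2) *
    (1 + q ^ ((i : ℤ) - (j : ℤ)).natAbs - q ^ (max i j))


lemma gaussBinom_zero_right {R : Type*} [CommSemiring R] (q : R) (n : ℕ) :
    gaussBinom q n 0 = 1 := by cases n <;> rfl

lemma gaussBinom_eq_zero {R : Type*} [CommSemiring R] (q : R) :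
    ∀ {n k : ℕ}, n < k → gaussBinom q n k = 0
  | 0, _ + 1, _ => rfl
  | n + 1, k + 1, h => by
    rw [gaussBinom, gaussBinom_eq_zero q (by omega), gaussBinom_eq_zero q (by omega)]
    ring

lemma map_gaussBinom {R S : Type*} [CommSemiring R] [CommSemiring S] (f : R →+* S) (q : R) :
    ∀ (n k : ℕ), f (gaussBinom q n k) = gaussBinom (f q) n k
  | _, 0 => by rw [gaussBinom_zero_right, gaussBinom_zero_right, map_one]
  | 0, _ + 1 => by rw [gaussBinom, gaussBinom, map_zero]
  | n + 1, k + 1 => by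
    rw [gaussBinom, gaussBinom, map_add, map_mul, map_pow,
      map_gaussBinom f q n k, map_gaussBinom f q n (k + 1)]

lemma map_Nq {R S : Type*} [CommRing R] [CommRing S] (f : R →+* S) (q : R) (i j a b : ℕ) :
    f (Nq q i j a b) = Nq (f q) i j a b := by
  simp only [Nq, map_mul, map_sub, map_add, map_pow, map_one, map_neg, map_gaussBinom]

lemma two_mul_choose_two : ∀ n : ℕ, 2 * n.choose 2 = n * (n - 1)
  | 0 => rfl
  | n + 1 => by
    rw [Nat.choose_succ_succ, Nat.choose_one_right, Nat.mul_add, two_mul_choose_two n]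
    cases n with
    | zero => rfl
    | succ m => simp only [Nat.add_sub_cancel]; ring

lemma add_choose_two (m n : ℕ) : (m + n).choose 2 = m.choose 2 + n.choose 2 + m * n := by
  cases m with
  | zero => simp
  | succ m =>
    cases n with
    | zero => simp
    | succ n =>
      have h1 := two_mul_choose_two (m + 1 + (n + 1))
      have h2 := two_mul_choose_two (m + 1)
      have h3 := two_mul_choose_two (n + 1)
      have e1 : (m + 1 + (n + 1)) * (m + 1 + (n + 1) - 1)
          = (m + 1) * (m + 1 - 1) + (n + 1) * (n + 1 - 1) + 2 * ((m + 1) * (n + 1)) := by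
        have ha : m + 1 + (n + 1) - 1 = m + n + 1 := by omega
        have hb : m + 1 - 1 = m := by omega
        have hc : n + 1 - 1 = n := by omega
        rw [ha, hb, hc]; ring
      linarith [h1, h2, h3, e1]

lemma choose_sub_key {i j : ℕ} (h : i ≤ j) :
    (j - i).choose 2 + i * j = i.choose 2 + j.choose 2 + i := by
  obtain ⟨d, rfl⟩ := Nat.exists_eq_add_of_le h
  rw [Nat.add_sub_cancel_left, add_choose_two i d]
  cases i with
  | zero => simp
  | succ i =>
    have h2 := two_mul_choose_two (i + 1)
    have hb : i + 1 - 1 = i := by omega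
    rw [hb] at h2
    have hexp : (i + 1) * (i + 1 + d) = (i + 1) * i + (i + 1) + (i + 1) * d := by ring
    linarith [h2, hexp]

lemma choose_sub_key_int {i j : ℕ} (h : i ≤ j) :
    (((j - i).choose 2 : ℕ) : ℤ) = i.choose 2 + j.choose 2 + i - i * j := by
  have := choose_sub_key h
  zify at this
  linarith

lemma gauss_sum_prod {R : Type*} [CommRing R] (q : R) :
    ∀ (n : ℕ) (x : R),
      ∑ i ∈ Finset.range (n + 1), (-1 : R) ^ i * gaussBinom q n i * q ^ i.choose 2 * x ^ i
        = ∏ k ∈ Finset.range n, (1 - x * q ^ k)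
  | 0, x => by simp [gaussBinom]
  | n + 1, x => by
    have IH := gauss_sum_prod q n (q * x)
    have hG : ∑ i ∈ Finset.range (n + 1 + 1),
          (-1 : R) ^ i * gaussBinom q n i * q ^ i.choose 2 * (q * x) ^ i
        = ∑ i ∈ Finset.range (n + 1),
          (-1 : R) ^ i * gaussBinom q n i * q ^ i.choose 2 * (q * x) ^ i := by
      rw [Finset.sum_range_succ, gaussBinom_eq_zero q (by omega)]
      ring
    rw [Finset.sum_range_succ']
    have hterm : ∀ i : ℕ,
        (-1 : R) ^ (i+1) * gaussBinom q (n+1) (i+1) * q ^ (i+1).choose 2 * x ^ (i+1)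
          = -x * ((-1 : R) ^ i * gaussBinom q n i * q ^ i.choose 2 * (q * x) ^ i)
            + (-1 : R) ^ (i+1) * gaussBinom q n (i+1) * q ^ (i+1).choose 2 * (q * x) ^ (i+1) := by
      intro i
      rw [show gaussBinom q (n+1) (i+1) = gaussBinom q n i + q ^ (i+1) * gaussBinom q n (i+1) from rfl]
      have hc1 : (i+1).choose 2 = i.choose 2 + i := by
        rw [Nat.choose_succ_succ i 1, Nat.choose_one_right]; exact Nat.add_comm _ _
      rw [hc1]
      ring
    rw [Finset.sum_congr rfl (fun i _ => hterm i), Finset.sum_add_distrib, ← Finset.mul_sum,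
      IH]
    have : ∑ i ∈ Finset.range (n + 1),
          (-1 : R) ^ (i+1) * gaussBinom q n (i+1) * q ^ (i+1).choose 2 * (q * x) ^ (i+1)
          + (-1 : R) ^ 0 * gaussBinom q (n+1) 0 * q ^ (Nat.choose 0 2) * x ^ 0
        = ∑ i ∈ Finset.range (n + 1 + 1),
          (-1 : R) ^ i * gaussBinom q n i * q ^ i.choose 2 * (q * x) ^ i := by
      conv_rhs => rw [Finset.sum_range_succ']
      simp [gaussBinom_zero_right]
    rw [add_assoc, this, hG, IH, Finset.prod_range_succ']
    have hp : ∀ k : ℕ, (1 - x * q ^ (k+1)) = 1 - (q * x) * q ^ k := by intro k; ring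
    rw [Finset.prod_congr rfl (fun k _ => hp k)]
    ring

lemma Nq_pointwise {K : Type*} [Field K] (q : K) (hq : q ≠ 0) {i j a b : ℕ}
    (hi : i ≤ a) (hj : j ≤ b) :
    Nq q i j a b = q ^ (a * b) *
      (((-1:K)^i * gaussBinom q a i * q ^ i.choose 2 * (q ^ ((1:ℤ) - b)) ^ i) *
        ((-1:K)^j * gaussBinom q b j * q ^ j.choose 2 * (q ^ (-(a:ℤ))) ^ j)
       + ((-1:K)^i * gaussBinom q a i * q ^ i.choose 2 * (q ^ (-(b:ℤ))) ^ i) *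
        ((-1:K)^j * gaussBinom q b j * q ^ j.choose 2 * (q ^ ((1:ℤ) - a)) ^ j)
       - ((-1:K)^i * gaussBinom q a i * q ^ i.choose 2 * (q ^ ((1:ℤ) - b)) ^ i) *
        ((-1:K)^j * gaussBinom q b j * q ^ j.choose 2 * (q ^ ((1:ℤ) - a)) ^ j)) := by
  have hzp : ∀ (z : ℤ) (n : ℕ), ((q:K) ^ z) ^ n = q ^ (z * n) := by
    intro z n; rw [zpow_mul, zpow_natCast]
  have key : q ^ ((a-i)*(b-j)) * q ^ (Nat.choose ((i : ℤ) - (j : ℤ)).natAbs 2) *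
      (1 + q ^ ((i : ℤ) - (j : ℤ)).natAbs - q ^ (max i j))
    = q^(a*b) * ((q^(i.choose 2) * (q ^ ((1:ℤ)-b))^i) * (q^(j.choose 2) * (q ^ (-(a:ℤ)))^j)
       + (q^(i.choose 2) * (q^(-(b:ℤ)))^i) * (q^(j.choose 2) * (q^((1:ℤ)-a))^j)
       - (q^(i.choose 2) * (q^((1:ℤ)-b))^i) * (q^(j.choose 2) * (q^((1:ℤ)-a))^j)) := by
    rcases le_total i j with h | h
    · have hd : (((i:ℤ) - j).natAbs) = j - i := by omega
      have hmax : max i j = j := max_eq_right h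
      rw [hd, hmax]
      have hch := choose_sub_key_int h
      simp only [hzp, ← zpow_natCast q, mul_add, mul_sub, mul_one, ← zpow_add₀ hq]
      have hch := choose_sub_key_int h
      rw [show ((((a - i) * (b - j) : ℕ)) + (((j - i).choose 2 : ℕ)) : ℤ)
            = ((a * b : ℕ) : ℤ) + (((i.choose 2 : ℕ) : ℤ) + (1 - (b:ℤ)) * (i:ℤ)
              + (((j.choose 2 : ℕ) : ℤ) + -(a:ℤ) * (j:ℤ))) from by
          push_cast [Nat.cast_sub hi, Nat.cast_sub hj, Nat.cast_sub h]
          linear_combination hch]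
      rw [show ((a * b : ℕ) : ℤ) + (((i.choose 2 : ℕ) : ℤ) + (1 - (b:ℤ)) * (i:ℤ)
              + (((j.choose 2 : ℕ) : ℤ) + -(a:ℤ) * (j:ℤ))) + ((j - i : ℕ) : ℤ)
            = ((a * b : ℕ) : ℤ) + (((i.choose 2 : ℕ) : ℤ) + -(b:ℤ) * (i:ℤ)
              + (((j.choose 2 : ℕ) : ℤ) + (1 - (a:ℤ)) * (j:ℤ))) from by
          push_cast [Nat.cast_sub h]; ring]
      rw [show ((a * b : ℕ) : ℤ) + (((i.choose 2 : ℕ) : ℤ) + (1 - (b:ℤ)) * (i:ℤ)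
              + (((j.choose 2 : ℕ) : ℤ) + -(a:ℤ) * (j:ℤ))) + (j : ℤ)
            = ((a * b : ℕ) : ℤ) + (((i.choose 2 : ℕ) : ℤ) + (1 - (b:ℤ)) * (i:ℤ)
              + (((j.choose 2 : ℕ) : ℤ) + (1 - (a:ℤ)) * (j:ℤ))) from by
          push_cast; ring]
    · have hd : (((i:ℤ) - j).natAbs) = i - j := by omega
      have hmax : max i j = i := max_eq_left h
      rw [hd, hmax]
      simp only [hzp, ← zpow_natCast q, mul_add, mul_sub, mul_one, ← zpow_add₀ hq]
      have hch := choose_sub_key_int h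
      rw [show ((((a - i) * (b - j) : ℕ)) + (((i - j).choose 2 : ℕ)) : ℤ)
            = ((a * b : ℕ) : ℤ) + (((i.choose 2 : ℕ) : ℤ) + -(b:ℤ) * (i:ℤ)
              + (((j.choose 2 : ℕ) : ℤ) + (1 - (a:ℤ)) * (j:ℤ))) from by
          push_cast [Nat.cast_sub hi, Nat.cast_sub hj, Nat.cast_sub h]
          linear_combination hch]
      rw [show ((a * b : ℕ) : ℤ) + (((i.choose 2 : ℕ) : ℤ) + -(b:ℤ) * (i:ℤ)
              + (((j.choose 2 : ℕ) : ℤ) + (1 - (a:ℤ)) * (j:ℤ))) + ((i - j : ℕ) : ℤ)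
            = ((a * b : ℕ) : ℤ) + (((i.choose 2 : ℕ) : ℤ) + (1 - (b:ℤ)) * (i:ℤ)
              + (((j.choose 2 : ℕ) : ℤ) + -(a:ℤ) * (j:ℤ))) from by
          push_cast [Nat.cast_sub h]; ring]
      rw [show ((a * b : ℕ) : ℤ) + (((i.choose 2 : ℕ) : ℤ) + -(b:ℤ) * (i:ℤ)
              + (((j.choose 2 : ℕ) : ℤ) + (1 - (a:ℤ)) * (j:ℤ))) + (i : ℤ)
            = ((a * b : ℕ) : ℤ) + (((i.choose 2 : ℕ) : ℤ) + (1 - (b:ℤ)) * (i:ℤ)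
              + (((j.choose 2 : ℕ) : ℤ) + (1 - (a:ℤ)) * (j:ℤ))) from by
          push_cast; ring]
      ring
  unfold Nq
  linear_combination ((-1:K)^(i+j) * gaussBinom q a i * gaussBinom q b j) * key

lemma prod_zero_of {K : Type*} [Field K] (q : K) (hq : q ≠ 0) (n : ℕ) (z : ℤ) (m : ℕ)
    (hm : m < n) (hz : z + m = 0) :
    ∏ k ∈ Finset.range n, (1 - q ^ z * q ^ k) = 0 :=
  Finset.prod_eq_zero (Finset.mem_range.2 hm)
    (by rw [← zpow_natCast q m, ← zpow_add₀ hq, hz, zpow_zero, sub_self])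

lemma Nq_sum_delta_field {K : Type*} [Field K] (q : K) (hq : q ≠ 0) (a b : ℕ) :
    ∑ i ∈ Finset.range (a + 1), ∑ j ∈ Finset.range (b + 1), Nq q i j a b =
      if a = 0 ∧ b = 0 then 1 else 0 := by
  set G1 : ℕ → K := fun i => (-1:K)^i * gaussBinom q a i * q ^ i.choose 2 * (q ^ ((1:ℤ) - b)) ^ i with hG1
  set G2 : ℕ → K := fun i => (-1:K)^i * gaussBinom q a i * q ^ i.choose 2 * (q ^ (-(b:ℤ))) ^ i with hG2
  set H1 : ℕ → K := fun j => (-1:K)^j * gaussBinom q b j * q ^ j.choose 2 * (q ^ (-(a:ℤ))) ^ j with hH1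
  set H2 : ℕ → K := fun j => (-1:K)^j * gaussBinom q b j * q ^ j.choose 2 * (q ^ ((1:ℤ) - a)) ^ j with hH2
  have hstep : ∑ i ∈ Finset.range (a + 1), ∑ j ∈ Finset.range (b + 1), Nq q i j a b
      = q ^ (a*b) * ((∑ i ∈ Finset.range (a+1), G1 i) * (∑ j ∈ Finset.range (b+1), H1 j)
        + (∑ i ∈ Finset.range (a+1), G2 i) * (∑ j ∈ Finset.range (b+1), H2 j)
        - (∑ i ∈ Finset.range (a+1), G1 i) * (∑ j ∈ Finset.range (b+1), H2 j)) := by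
    rw [Finset.sum_mul_sum, Finset.sum_mul_sum, Finset.sum_mul_sum]
    simp only [← Finset.sum_add_distrib, ← Finset.sum_sub_distrib, Finset.mul_sum]
    refine Finset.sum_congr rfl fun i hi => Finset.sum_congr rfl fun j hj => ?_
    rw [Nq_pointwise q hq (by simpa using Nat.lt_succ_iff.mp (Finset.mem_range.mp hi))
        (by simpa using Nat.lt_succ_iff.mp (Finset.mem_range.mp hj))]
  rw [hstep, hG1, hG2, hH1, hH2,
    gauss_sum_prod q a (q ^ ((1:ℤ) - b)), gauss_sum_prod q a (q ^ (-(b:ℤ))),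
    gauss_sum_prod q b (q ^ (-(a:ℤ))), gauss_sum_prod q b (q ^ ((1:ℤ) - a))]
  rcases Nat.eq_zero_or_pos a with rfl | ha
  · rcases Nat.eq_zero_or_pos b with rfl | hb
    · norm_num
    · rw [if_neg (by omega)]
      rw [prod_zero_of q hq b (-(0:ℕ):ℤ) 0 hb (by norm_num)]
      simp
  · rcases Nat.eq_zero_or_pos b with rfl | hb
    · rw [if_neg (by omega)]
      rw [prod_zero_of q hq a (-(0:ℕ):ℤ) 0 ha (by norm_num)]
      simp
    · rw [if_neg (by omega)]
      rcases lt_trichotomy a b with h | rfl | h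
      · rw [prod_zero_of q hq b (-(a:ℤ)) a h (by push_cast; ring),
          prod_zero_of q hq b ((1:ℤ) - a) (a-1) (by omega)
            (by push_cast [Nat.cast_sub ha]; ring)]
        ring
      · rw [prod_zero_of q hq a ((1:ℤ) - a) (a-1) (by omega)
            (by push_cast [Nat.cast_sub ha]; ring)]
        ring
      · rw [prod_zero_of q hq a ((1:ℤ) - b) (b-1) (by omega)
            (by push_cast [Nat.cast_sub hb]; ring),
          prod_zero_of q hq a (-(b:ℤ)) b h (by push_cast; ring)]
        ring

lemma Nq_sum_delta_polyInt (a b : ℕ) :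
    ∑ i ∈ Finset.range (a + 1), ∑ j ∈ Finset.range (b + 1),
        Nq (Polynomial.X : Polynomial ℤ) i j a b =
      if a = 0 ∧ b = 0 then 1 else 0 := by
  set ψ : Polynomial ℤ →+* RatFunc ℚ :=
    ((algebraMap (Polynomial ℚ) (RatFunc ℚ)) : Polynomial ℚ →+* RatFunc ℚ).comp
      (Polynomial.mapRingHom (Int.castRingHom ℚ)) with hψ
  have hinj : Function.Injective ψ := by
    rw [hψ, RingHom.coe_comp]
    exact Function.Injective.comp (RatFunc.algebraMap_injective ℚ)
      (Polynomial.map_injective (Int.castRingHom ℚ) (fun x y h => by simpa using h))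
  apply hinj
  have hX : ψ (Polynomial.X : Polynomial ℤ) = RatFunc.X := by
    rw [hψ]
    simp [RatFunc.algebraMap_X]
  rw [map_sum]
  simp only [map_sum, map_Nq, hX]
  rw [Nq_sum_delta_field RatFunc.X RatFunc.X_ne_zero a b]
  split <;> simp

theorem Nq_sum_delta {R : Type*} [CommRing R] (q : R) (a b : ℕ) :
    ∑ i ∈ Finset.range (a + 1), ∑ j ∈ Finset.range (b + 1), Nq q i j a b =
      if a = 0 ∧ b = 0 then 1 else 0 := by
  let φ : Polynomial ℤ →+* R := Polynomial.eval₂RingHom (Int.castRingHom R) q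
  have hX : φ (Polynomial.X) = q := Polynomial.eval₂_X _ _
  have := Nq_sum_delta_polyInt a b
  have h2 := congrArg φ this
  rw [map_sum] at h2
  simp only [map_sum, map_Nq, hX] at h2
  rw [h2]
  split <;> simp
end

section
/- Let G be a bipartite graph whose parts A and B are the set of 1-dimensional subspaces and the set of (n-1)-dimensional subspaces of F_q^n not comparable to a fixed pair (e, e^c), with edges given by inclusion. Then every vertex of G has degree q^(n-2), and G admits a perfect matching. -/
open Module Submodule

section Aux

variable {F : Type*} [Field F] [Fintype F]

private lemma aux_submodule_field_eq_top (p : Submodule F F) (hp : p ≠ ⊥) : p = ⊤ := by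
  obtain ⟨u, hu, hu0⟩ : ∃ u ∈ p, u ≠ 0 := by
    by_contra h
    push_neg at h
    exact hp ((Submodule.eq_bot_iff p).mpr h)
  refine eq_top_iff.mpr fun k _ => ?_
  have : k = (k * u⁻¹) • u := by
    simp [smul_eq_mul, mul_assoc, inv_mul_cancel₀ hu0]
  rw [this]
  exact p.smul_mem _ hu

private lemma fiber_card {M : Type*} [AddCommGroup M] [Module F M] [FiniteDimensional F M]
    (f : M →ₗ[F] F) (hf : f ≠ 0) (c : F) :
    Nat.card {m : M // f m = c} = Fintype.card F ^ (Module.finrank F M - 1) := by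
  have hFin : Finite M := Module.finite_of_finite F
  obtain ⟨m, hm⟩ : ∃ m, f m ≠ 0 := by
    by_contra h
    push_neg at h
    exact hf (LinearMap.ext fun m => by simp [h m])
  have hfm₀ : f ((c * (f m)⁻¹) • m) = c := by
    simp [map_smul, smul_eq_mul, mul_assoc, inv_mul_cancel₀ hm]
  set m₀ : M := (c * (f m)⁻¹) • m with hm₀def
  have e : {m : M // f m = c} ≃ LinearMap.ker f :=
    { toFun := fun p => ⟨p.1 - m₀, by simp [LinearMap.mem_ker, p.2, hfm₀]⟩
      invFun := fun k => ⟨m₀ + k.1, by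
        have hk := k.2
        rw [LinearMap.mem_ker] at hk
        simp [hk, hfm₀]⟩
      left_inv := fun p => by ext; simp
      right_inv := fun k => by ext; simp }
  rw [Nat.card_congr e]
  have : Fintype (LinearMap.ker f) := Fintype.ofFinite _
  rw [Nat.card_eq_fintype_card, card_eq_pow_finrank (K := F)]
  congr 1
  have hr : LinearMap.range f = ⊤ := by
    apply aux_submodule_field_eq_top
    intro h0
    exact hm (by simpa [h0] using LinearMap.mem_range_self f m)
  have hrn := LinearMap.finrank_range_add_finrank_ker f
  rw [hr, finrank_top, Module.finrank_self] at hrn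
  omega

private lemma eq_span_of_finrank_one {V : Type*} [AddCommGroup V] [Module F V]
    {W : Submodule F V} (h : Module.finrank F W = 1) :
    ∃ x : V, x ≠ 0 ∧ x ∈ W ∧ W = span F {x} := by
  obtain ⟨y, hy0, hy⟩ := finrank_eq_one_iff'.mp h
  refine ⟨(y : V), by simpa using hy0, y.2, le_antisymm ?_ ?_⟩
  · intro z hz
    obtain ⟨c, hc⟩ := hy ⟨z, hz⟩
    exact Submodule.mem_span_singleton.mpr ⟨c, by
      have := congrArg (Subtype.val) hc
      simpa using this⟩
  · rw [Submodule.span_singleton_le_iff_mem]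
    exact y.2

end Aux
section Geo

variable {F : Type*} [Field F] [Fintype F]
variable {V : Type*} [AddCommGroup V] [Module F V]
variable (x : V) (ec : Submodule F V)

/-- The embedding `v ↦ v - φ(v) • x` of `ec` into `V`. -/
private noncomputable def Tmap (φ : Module.Dual F ec) : ↥ec →ₗ[F] V :=
  ec.subtype - (LinearMap.smulRight φ x)

private lemma Tmap_apply (φ : Module.Dual F ec) (v : ↥ec) :
    Tmap x ec φ v = (v : V) - φ v • x := rfl

variable {x ec}
variable (hx : x ≠ 0) (hc : IsCompl (span F {x}) ec)

include hx hc

private lemma unique_decomp {c c' : F} {v v' : ↥ec}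
    (h : c • x + (v : V) = c' • x + (v' : V)) : c = c' ∧ v = v' := by
  have h1 : (c - c') • x = ((v' : V) - v) := by
    rw [sub_smul, sub_eq_sub_iff_add_eq_add, h]
    exact add_comm _ _
  have hmem1 : (c - c') • x ∈ span F {x} :=
    Submodule.smul_mem _ _ (Submodule.mem_span_singleton_self x)
  have hmem2 : ((v' : V) - v) ∈ ec := sub_mem v'.2 v.2
  have h0 : (c - c') • x = 0 :=
    (Submodule.disjoint_def.mp hc.disjoint) _ hmem1 (h1 ▸ hmem2)
  have hcc : c = c' := by
    rcases smul_eq_zero.mp h0 with h | h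
    · exact sub_eq_zero.mp h
    · exact absurd h hx
  refine ⟨hcc, ?_⟩
  have : ((v' : V) - v) = 0 := by rw [← h1, h0]
  exact (Subtype.ext (sub_eq_zero.mp this)).symm

private lemma mem_range_Tmap {φ : Module.Dual F ec} {c : F} {v : ↥ec} :
    c • x + (v : V) ∈ LinearMap.range (Tmap x ec φ) ↔ c = -φ v := by
  constructor
  · rintro ⟨w, hw⟩
    rw [Tmap_apply] at hw
    have hw' : (-φ w) • x + (w : V) = c • x + (v : V) := by
      rw [neg_smul, neg_add_eq_sub]; exact hw
    obtain ⟨h1, h2⟩ := unique_decomp hx hc hw'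
    subst h2; exact h1.symm
  · intro hcv
    refine ⟨v, ?_⟩
    rw [Tmap_apply, hcv, neg_smul, neg_add_eq_sub]

private lemma add_mem_range_Tmap {φ : Module.Dual F ec} {v : ↥ec} :
    x + (v : V) ∈ LinearMap.range (Tmap x ec φ) ↔ φ v = -1 := by
  have h1 := mem_range_Tmap (hx := hx) (hc := hc) (φ := φ) (c := (1 : F)) (v := v)
  rw [one_smul] at h1
  rw [h1]
  constructor
  · intro h; exact neg_eq_iff_eq_neg.mp h.symm
  · intro h; rw [h, neg_neg]

private lemma x_notMem_range_Tmap {φ : Module.Dual F ec} :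
    x ∉ LinearMap.range (Tmap x ec φ) := by
  intro hmem
  have heq : (1 : F) • x + ((0 : ↥ec) : V) = x := by simp
  have hmem' : (1 : F) • x + ((0 : ↥ec) : V) ∈ LinearMap.range (Tmap x ec φ) := by
    rw [heq]; exact hmem
  have h1 := (mem_range_Tmap hx hc).mp hmem'
  simp at h1

private lemma x_add_ne_zero (v : ↥ec) : x + (v : V) ≠ 0 := by
  intro h
  have hxec : x ∈ ec := by
    rw [eq_neg_of_add_eq_zero_left h]
    exact neg_mem v.2
  have := (Submodule.disjoint_def.mp hc.disjoint) x (Submodule.mem_span_singleton_self x) hxec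
  exact hx this

private lemma amap_memA {v : ↥ec} (hv : v ≠ 0) :
    Module.finrank F (span F {x + (v : V)}) = 1 ∧
      ¬ span F {x + (v : V)} ≤ ec ∧ ¬ span F {x} ≤ span F {x + (v : V)} := by
  refine ⟨finrank_span_singleton (x_add_ne_zero hx hc v), ?_, ?_⟩
  · rw [Submodule.span_singleton_le_iff_mem]
    intro hmem
    have hxec : x ∈ ec := by
      have heq : x = (x + (v : V)) - (v : V) := by abel
      rw [heq]; exact sub_mem hmem v.2
    exact hx ((Submodule.disjoint_def.mp hc.disjoint) x (Submodule.mem_span_singleton_self x) hxec)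
  · rw [Submodule.span_singleton_le_iff_mem]
    intro hmem
    obtain ⟨k, hk⟩ := Submodule.mem_span_singleton.mp hmem
    have hk' : k • x + ((k • v : ↥ec) : V) = (1 : F) • x + ((0 : ↥ec) : V) := by
      simp only [Submodule.coe_smul, ZeroMemClass.coe_zero, one_smul, add_zero]
      rw [← smul_add]; exact hk
    obtain ⟨h1, h2⟩ := unique_decomp hx hc hk'
    subst h1
    rw [one_smul] at h2
    exact hv h2

private lemma amap_inj : Function.Injective (fun v : ↥ec => span F {x + (v : V)}) := by
  intro v v' h
  have h2 : span F {x + (v : V)} = span F {x + (v' : V)} := h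
  have hmem : x + (v' : V) ∈ span F {x + (v : V)} := by
    rw [h2]; exact Submodule.mem_span_singleton_self _
  obtain ⟨k, hk⟩ := Submodule.mem_span_singleton.mp hmem
  have hk' : k • x + ((k • v : ↥ec) : V) = (1 : F) • x + (v' : V) := by
    simp only [Submodule.coe_smul, one_smul]
    rw [← smul_add]; exact hk
  obtain ⟨h1, h2⟩ := unique_decomp hx hc hk'
  subst h1
  rw [one_smul] at h2
  exact h2

private lemma amap_surj {a : Submodule F V} (ha1 : Module.finrank F a = 1)
    (ha2 : ¬ a ≤ ec) (ha3 : ¬ span F {x} ≤ a) :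
    ∃ v : ↥ec, v ≠ 0 ∧ a = span F {x + (v : V)} := by
  obtain ⟨y, hy0, hya, hspan⟩ := eq_span_of_finrank_one ha1
  have hytop : y ∈ span F {x} ⊔ ec := by rw [hc.codisjoint.eq_top]; exact Submodule.mem_top
  obtain ⟨p, hp, w, hw, hpw⟩ := Submodule.mem_sup.mp hytop
  obtain ⟨cc, hcc⟩ := Submodule.mem_span_singleton.mp hp
  have hcc0 : cc ≠ 0 := by
    intro h0
    subst h0
    rw [zero_smul] at hcc
    apply ha2
    rw [hspan, Submodule.span_singleton_le_iff_mem]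
    rw [← hpw, ← hcc, zero_add]
    exact hw
  refine ⟨cc⁻¹ • ⟨w, hw⟩, ?_, ?_⟩
  · intro h0
    apply ha3
    rw [Submodule.span_singleton_le_iff_mem]
    have hw0 : w = 0 := by
      have h1 := congrArg (fun z : ↥ec => cc • (z : V)) h0
      simpa [smul_smul, mul_inv_cancel₀ hcc0] using h1
    rw [hw0, add_zero] at hpw
    rw [← hcc] at hpw
    have hxy : x = cc⁻¹ • y := by rw [← hpw, smul_smul, inv_mul_cancel₀ hcc0, one_smul]
    rw [hxy]
    exact Submodule.smul_mem _ _ hya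
  · have hxv : x + (((cc⁻¹ • ⟨w, hw⟩ : ↥ec)) : V) = cc⁻¹ • y := by
      rw [← hpw, ← hcc]
      simp only [Submodule.coe_smul]
      rw [smul_add, smul_smul, inv_mul_cancel₀ hcc0, one_smul]
    rw [hxv, hspan]
    exact (Submodule.span_singleton_smul_eq (IsUnit.mk0 _ (inv_ne_zero hcc0)) y).symm

private lemma Tmap_inj (φ : Module.Dual F ec) : Function.Injective (Tmap x ec φ) := by
  intro w w' h
  rw [Tmap_apply, Tmap_apply] at h
  have h' : (-φ w) • x + (w : V) = (-φ w') • x + (w' : V) := by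
    rw [neg_smul, neg_smul, neg_add_eq_sub, neg_add_eq_sub]; exact h
  exact (unique_decomp hx hc h').2

private lemma bmap_inj : Function.Injective
    (fun φ : Module.Dual F ec => LinearMap.range (Tmap x ec φ)) := by
  intro φ ψ h
  have h2 : LinearMap.range (Tmap x ec φ) = LinearMap.range (Tmap x ec ψ) := h
  ext v
  have hmem : Tmap x ec φ v ∈ LinearMap.range (Tmap x ec ψ) := by
    rw [← h2]; exact LinearMap.mem_range_self _ v
  rw [Tmap_apply] at hmem
  have hmem' : (-φ v) • x + (v : V) ∈ LinearMap.range (Tmap x ec ψ) := by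
    rw [neg_smul, neg_add_eq_sub]; exact hmem
  exact neg_injective ((mem_range_Tmap hx hc).mp hmem')

private lemma bmap_memB (φ : Module.Dual F ec) (hφ : φ ≠ 0) :
    Module.finrank F (LinearMap.range (Tmap x ec φ)) = Module.finrank F ec ∧
      ¬ LinearMap.range (Tmap x ec φ) ≤ ec ∧ ¬ span F {x} ≤ LinearMap.range (Tmap x ec φ) := by
  refine ⟨LinearMap.finrank_range_of_inj (Tmap_inj hx hc φ), ?_, ?_⟩
  · intro hle
    obtain ⟨w, hw⟩ : ∃ w, φ w ≠ 0 := by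
      by_contra h
      push_neg at h
      exact hφ (LinearMap.ext fun w => by simp [h w])
    have hmem : Tmap x ec φ w ∈ ec := hle (LinearMap.mem_range_self _ w)
    rw [Tmap_apply] at hmem
    have hsm : φ w • x ∈ ec := by
      have h2 : φ w • x = (w : V) - ((w : V) - φ w • x) := by abel
      rw [h2]; exact sub_mem w.2 hmem
    have h0 := (Submodule.disjoint_def.mp hc.disjoint) _
      (Submodule.smul_mem _ _ (Submodule.mem_span_singleton_self x)) hsm
    rcases smul_eq_zero.mp h0 with h | h
    · exact hw h
    · exact hx h
  · rw [Submodule.span_singleton_le_iff_mem]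
    exact x_notMem_range_Tmap hx hc

end Geo
section Surj

variable {F : Type*} [Field F] [Fintype F]
variable {V : Type*} [AddCommGroup V] [Module F V] [FiniteDimensional F V]
variable {x : V} {ec : Submodule F V}
variable (hx : x ≠ 0) (hc : IsCompl (span F {x}) ec)

include hx hc

private lemma bmap_surj {n : ℕ} (hn : Module.finrank F V = n) (hn3 : 3 ≤ n)
    {b : Submodule F V}
    (hb1 : Module.finrank F b = n - 1) (hb2 : ¬ b ≤ ec) (hb3 : ¬ span F {x} ≤ b) :
    ∃ φ : Module.Dual F ec, φ ≠ 0 ∧ b = LinearMap.range (Tmap x ec φ) := by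
  have hxb : x ∉ b := fun h => hb3 (Submodule.span_singleton_le_iff_mem x b |>.mpr h)
  have hec : Module.finrank F ec = n - 1 := by
    have h1 := Submodule.finrank_add_eq_of_isCompl hc
    rw [finrank_span_singleton hx, hn] at h1
    omega
  have hdisj : Disjoint (span F {x}) b := by
    rw [Submodule.disjoint_def]
    intro z hz hzb
    obtain ⟨k, hk⟩ := Submodule.mem_span_singleton.mp hz
    by_cases hk0 : k = 0
    · rw [← hk, hk0, zero_smul]
    · exfalso
      apply hxb
      have : x = k⁻¹ • z := by rw [← hk, smul_smul, inv_mul_cancel₀ hk0, one_smul]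
      rw [this]
      exact b.smul_mem _ hzb
  have hcodis : span F {x} ⊔ b = ⊤ := by
    apply Submodule.eq_top_of_finrank_eq
    have h1 := Submodule.finrank_sup_add_finrank_inf_eq (span F {x}) b
    rw [hdisj.eq_bot, finrank_bot, finrank_span_singleton hx, hb1] at h1
    rw [hn]
    omega
  have hcb : IsCompl (span F {x}) b := ⟨hdisj, codisjoint_iff.mpr hcodis⟩
  set π := (span F {x}).linearProjOfIsCompl b hcb with hπ
  set coord := (LinearEquiv.toSpanNonzeroSingleton F V x hx).symm with hcoord
  set φ : Module.Dual F ec := (coord : ↥(span F {x}) →ₗ[F] F) ∘ₗ (π ∘ₗ ec.subtype) with hφdef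
  have hπx : ∀ v : ↥ec, ((π (v : V)) : V) = φ v • x := by
    intro v
    have h1 : LinearEquiv.toSpanNonzeroSingleton F V x hx (φ v) = π (v : V) := by
      simp only [hφdef, hcoord, LinearMap.comp_apply, LinearMap.coe_comp, LinearEquiv.coe_coe,
        Function.comp_apply, Submodule.coe_subtype, LinearEquiv.apply_symm_apply]
    rw [← h1, LinearEquiv.toSpanNonzeroSingleton_apply]
  have hTb : ∀ v : ↥ec, Tmap x ec φ v ∈ b := by
    intro v
    rw [Tmap_apply, ← hπx]
    have h2 := Submodule.projection_add_projection_eq_self hcb (v : V)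
    have h3 : (v : V) - ((π (v : V)) : V) =
        ((b.linearProjOfIsCompl (span F {x}) hcb.symm (v : V)) : V) :=
      (eq_sub_of_add_eq' h2).symm
    rw [h3]
    exact (b.linearProjOfIsCompl (span F {x}) hcb.symm (v : V)).2
  have hle : LinearMap.range (Tmap x ec φ) ≤ b := by
    rintro _ ⟨v, rfl⟩
    exact hTb v
  have hφ0 : φ ≠ 0 := by
    intro h0
    have hecle : ec ≤ b := by
      intro v hv
      have := hTb ⟨v, hv⟩
      rw [Tmap_apply, h0] at this
      simpa using this
    have : ec = b := Submodule.eq_of_le_of_finrank_eq hecle (by rw [hec, hb1])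
    exact hb2 (this ▸ le_refl b)
  refine ⟨φ, hφ0, ?_⟩
  have : LinearMap.range (Tmap x ec φ) = b := by
    apply Submodule.eq_of_le_of_finrank_eq hle
    rw [LinearMap.finrank_range_of_inj (Tmap_inj hx hc φ), hec, hb1]
  exact this.symm

end Surj
section Count

variable {F : Type*} [Field F] [Fintype F]
variable {V : Type*} [AddCommGroup V] [Module F V] [FiniteDimensional F V]
variable {ec : Submodule F V}

private lemma countA {n : ℕ} (hec : Module.finrank F ec = n - 1) (hn3 : 3 ≤ n)
    (v : ↥ec) (hv : v ≠ 0) :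
    Nat.card {φ : Module.Dual F ↥ec // φ v = -1} = Fintype.card F ^ (n - 2) := by
  have hev : Module.Dual.eval F ↥ec v ≠ 0 := by
    intro h0
    exact hv ((Module.eval_apply_eq_zero_iff F v).mp h0)
  have h1 := fiber_card (Module.Dual.eval F ↥ec v) hev (-1)
  have h2 : Nat.card {φ : Module.Dual F ↥ec // φ v = -1}
      = Nat.card {φ : Module.Dual F ↥ec // Module.Dual.eval F ↥ec v φ = -1} :=
    Nat.card_congr (Equiv.subtypeEquivRight (fun φ => by rw [Module.Dual.eval_apply]))
  rw [h2, h1, Subspace.dual_finrank_eq, hec]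
  congr 1

private lemma countB {n : ℕ} (hec : Module.finrank F ec = n - 1) (hn3 : 3 ≤ n)
    (φ : Module.Dual F ↥ec) (hφ : φ ≠ 0) :
    Nat.card {w : ↥ec // φ w = -1} = Fintype.card F ^ (n - 2) := by
  have h1 := fiber_card φ hφ (-1)
  rw [h1, hec]
  congr 1

end Count
/-- The bipartite graph whose parts are the atoms and coatoms of the subspace lattice of
`F_q^n` lying outside the intervals `[⊥, e^c]` and `[e, ⊤]`, with edges given by inclusion,
is `q^(n-2)`-regular and admits a perfect matching. -/
theorem bipartite_regular_and_matching (F : Type*) [Field F] [Fintype F] (q : ℕ)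
    (hq : Fintype.card F = q)
    (V : Type*) [AddCommGroup V] [Module F V] [FiniteDimensional F V]
    (n : ℕ) (hn : Module.finrank F V = n) (hn3 : 3 ≤ n)
    (e ec : Submodule F V) (he : Module.finrank F ↥e = 1) (hcompl : IsCompl e ec) :
    ∀ (A B : Set (Submodule F V)),
      A = {a : Submodule F V | Module.finrank F ↥a = 1 ∧ ¬a ≤ ec ∧ ¬e ≤ a} →
      B = {b : Submodule F V | Module.finrank F ↥b = n - 1 ∧ ¬b ≤ ec ∧ ¬e ≤ b} →
      (∀ a ∈ A, {b ∈ B | a ≤ b}.ncard = q ^ (n - 2)) ∧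
      (∀ b ∈ B, {a ∈ A | a ≤ b}.ncard = q ^ (n - 2)) ∧
      ∃ μ : A ≃ B, ∀ a : A, (a : Submodule F V) ≤ (μ a : Submodule F V) := by
  classical
  intro A B hA hB
  subst hq hA hB
  obtain ⟨x, hx, hxe, hespan⟩ := eq_span_of_finrank_one he
  subst hespan
  have hec : Module.finrank F ec = n - 1 := by
    have h1 := Submodule.finrank_add_eq_of_isCompl hcompl
    rw [finrank_span_singleton hx, hn] at h1
    omega
  have hFinV : Finite V := Module.finite_of_finite F
  refine ⟨?_, ?_, ?_⟩
  · -- degree of atoms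
    rintro a ⟨ha1, ha2, ha3⟩
    obtain ⟨v, hv, rfl⟩ := amap_surj hx hcompl ha1 ha2 ha3
    have hset : {b ∈ {b : Submodule F V |
          Module.finrank F ↥b = n - 1 ∧ ¬b ≤ ec ∧ ¬span F {x} ≤ b} | span F {x + (v : V)} ≤ b}
        = (fun φ : Module.Dual F ↥ec => LinearMap.range (Tmap x ec φ)) ''
          {φ : Module.Dual F ↥ec | φ v = -1} := by
      ext b
      simp only [Set.mem_setOf_eq, Set.mem_image]
      constructor
      · rintro ⟨⟨hb1, hb2, hb3⟩, hab⟩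
        obtain ⟨φ, hφ, rfl⟩ := bmap_surj hx hcompl hn hn3 hb1 hb2 hb3
        refine ⟨φ, ?_, rfl⟩
        exact (add_mem_range_Tmap hx hcompl).mp
          ((Submodule.span_singleton_le_iff_mem _ _).mp hab)
      · rintro ⟨φ, hφv, rfl⟩
        have hφ0 : φ ≠ 0 := by
          intro h0
          rw [h0] at hφv
          simp only [LinearMap.zero_apply] at hφv
          exact one_ne_zero (neg_eq_zero.mp hφv.symm)
        obtain ⟨hB1, hB2, hB3⟩ := bmap_memB hx hcompl φ hφ0
        exact ⟨⟨by rw [hB1, hec], hB2, hB3⟩,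
          (Submodule.span_singleton_le_iff_mem _ _).mpr
            ((add_mem_range_Tmap hx hcompl).mpr hφv)⟩
    rw [hset, Set.ncard_image_of_injective _ (bmap_inj hx hcompl),
      ← Nat.card_coe_set_eq]
    exact countA hec hn3 v hv
  · -- degree of coatoms
    rintro b ⟨hb1, hb2, hb3⟩
    obtain ⟨φ, hφ, rfl⟩ := bmap_surj hx hcompl hn hn3 hb1 hb2 hb3
    have hset : {a ∈ {a : Submodule F V |
          Module.finrank F ↥a = 1 ∧ ¬a ≤ ec ∧ ¬span F {x} ≤ a} |
            a ≤ LinearMap.range (Tmap x ec φ)}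
        = (fun w : ↥ec => span F {x + (w : V)}) '' {w : ↥ec | φ w = -1} := by
      ext a
      simp only [Set.mem_setOf_eq, Set.mem_image]
      constructor
      · rintro ⟨⟨ha1, ha2, ha3⟩, hab⟩
        obtain ⟨w, hw, rfl⟩ := amap_surj hx hcompl ha1 ha2 ha3
        refine ⟨w, ?_, rfl⟩
        exact (add_mem_range_Tmap hx hcompl).mp
          ((Submodule.span_singleton_le_iff_mem _ _).mp hab)
      · rintro ⟨w, hw, rfl⟩
        have hw0 : w ≠ 0 := by
          intro h0
          rw [h0] at hw
          simp only [Set.mem_setOf_eq, map_zero] at hw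
          exact one_ne_zero (neg_eq_zero.mp hw.symm)
        exact ⟨amap_memA hx hcompl hw0,
          (Submodule.span_singleton_le_iff_mem _ _).mpr
            ((add_mem_range_Tmap hx hcompl).mpr hw)⟩
    rw [hset, Set.ncard_image_of_injective _ (amap_inj hx hcompl),
      ← Nat.card_coe_set_eq]
    exact countB hec hn3 φ hφ
  · -- perfect matching
    have hFec : Fintype ↥ec := Fintype.ofFinite _
    have hFinD : Finite (Module.Dual F ↥ec) := Module.finite_of_finite F
    have hFdual : Fintype (Module.Dual F ↥ec) := Fintype.ofFinite _
    let r : {v : ↥ec // v ≠ 0} → {φ : Module.Dual F ↥ec // φ ≠ 0} → Prop :=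
      fun v φ => φ.1 v.1 = -1
    set d := Fintype.card F ^ (n - 2) with hd_def
    have hd : 0 < d := pow_pos Fintype.card_pos _
    have degA : ∀ v : {v : ↥ec // v ≠ 0},
        (Finset.univ.filter (fun φ : {φ : Module.Dual F ↥ec // φ ≠ 0} => r v φ)).card = d := by
      intro v
      have e1 : {φ : {φ : Module.Dual F ↥ec // φ ≠ 0} // r v φ}
          ≃ {φ : Module.Dual F ↥ec // φ v.1 = -1} :=
        (Equiv.subtypeSubtypeEquivSubtypeInter
            (fun φ : Module.Dual F ↥ec => φ ≠ 0) (fun φ => φ v.1 = -1)).trans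
          (Equiv.subtypeEquivRight (fun φ => by
            constructor
            · rintro ⟨-, h⟩; exact h
            · intro h
              refine ⟨?_, h⟩
              intro h0
              rw [h0] at h
              simp only [LinearMap.zero_apply] at h
              exact one_ne_zero (neg_eq_zero.mp h.symm)))
      rw [← Fintype.card_subtype, ← Nat.card_eq_fintype_card, Nat.card_congr e1]
      exact countA hec hn3 v.1 v.2
    have degB : ∀ φ : {φ : Module.Dual F ↥ec // φ ≠ 0},
        (Finset.univ.filter (fun v : {v : ↥ec // v ≠ 0} => r v φ)).card = d := by
      intro φ
      have e1 : {v : {v : ↥ec // v ≠ 0} // r v φ}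
          ≃ {w : ↥ec // φ.1 w = -1} :=
        (Equiv.subtypeSubtypeEquivSubtypeInter
            (fun w : ↥ec => w ≠ 0) (fun w => φ.1 w = -1)).trans
          (Equiv.subtypeEquivRight (fun w => by
            constructor
            · rintro ⟨-, h⟩; exact h
            · intro h
              refine ⟨?_, h⟩
              intro h0
              rw [h0] at h
              simp only [map_zero] at h
              exact one_ne_zero (neg_eq_zero.mp h.symm)))
      rw [← Fintype.card_subtype, ← Nat.card_eq_fintype_card, Nat.card_congr e1]
      exact countB hec hn3 φ.1 φ.2
    have hall : ∀ S : Finset {v : ↥ec // v ≠ 0},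
        S.card ≤ (Finset.univ.filter
          (fun φ : {φ : Module.Dual F ↥ec // φ ≠ 0} => ∃ v ∈ S, r v φ)).card := by
      intro S
      set t := Finset.univ.filter
        (fun φ : {φ : Module.Dual F ↥ec // φ ≠ 0} => ∃ v ∈ S, r v φ) with ht
      have hmle : ∀ v ∈ S, d ≤ (t.bipartiteAbove r v).card := by
        intro v hvS
        have hsub : Finset.univ.filter (fun φ => r v φ) ⊆ t.bipartiteAbove r v := by
          intro φ hφ
          rw [Finset.mem_filter] at hφ
          rw [Finset.mem_bipartiteAbove]
          refine ⟨?_, hφ.2⟩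
          rw [ht, Finset.mem_filter]
          exact ⟨Finset.mem_univ _, ⟨v, hvS, hφ.2⟩⟩
        exact (degA v).symm.le.trans (Finset.card_le_card hsub)
      have hnle : ∀ φ ∈ t, (S.bipartiteBelow r φ).card ≤ d := by
        intro φ hφ
        have hsub : S.bipartiteBelow r φ ⊆ Finset.univ.filter (fun v => r v φ) := by
          intro v hv
          rw [Finset.mem_bipartiteBelow] at hv
          rw [Finset.mem_filter]
          exact ⟨Finset.mem_univ _, hv.2⟩
        exact (Finset.card_le_card hsub).trans (degB φ).le
      have hcount := Finset.card_mul_le_card_mul r hmle hnle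
      exact Nat.le_of_mul_le_mul_right hcount hd
    obtain ⟨f, hfinj, hfr⟩ :=
      (Fintype.all_card_le_filter_rel_iff_exists_injective r).mp hall
    have hcards : Fintype.card {v : ↥ec // v ≠ 0}
        = Fintype.card {φ : Module.Dual F ↥ec // φ ≠ 0} := by
      have h1 : Fintype.card ↥ec = Fintype.card (Module.Dual F ↥ec) := by
        rw [card_eq_pow_finrank (K := F) (V := ↥ec),
          card_eq_pow_finrank (K := F) (V := Module.Dual F ↥ec),
          Subspace.dual_finrank_eq]
      have h2 := Fintype.card_subtype_compl (fun v : ↥ec => v = 0)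
      have h3 := Fintype.card_subtype_compl (fun φ : Module.Dual F ↥ec => φ = 0)
      rw [Fintype.card_subtype_eq (0 : ↥ec)] at h2
      rw [Fintype.card_subtype_eq (0 : Module.Dual F ↥ec)] at h3
      calc Fintype.card {v : ↥ec // v ≠ 0}
          = Fintype.card ↥ec - 1 := h2
        _ = Fintype.card (Module.Dual F ↥ec) - 1 := by rw [h1]
        _ = Fintype.card {φ : Module.Dual F ↥ec // φ ≠ 0} := h3.symm
    have hfbij : Function.Bijective f :=
      (Fintype.bijective_iff_injective_and_card f).mpr ⟨hfinj, hcards⟩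
    have memA' : ∀ v : {v : ↥ec // v ≠ 0},
        span F {x + (v.1 : V)} ∈ {a : Submodule F V |
          Module.finrank F ↥a = 1 ∧ ¬a ≤ ec ∧ ¬span F {x} ≤ a} :=
      fun v => amap_memA hx hcompl v.2
    have memB' : ∀ φ : {φ : Module.Dual F ↥ec // φ ≠ 0},
        LinearMap.range (Tmap x ec φ.1) ∈ {b : Submodule F V |
          Module.finrank F ↥b = n - 1 ∧ ¬b ≤ ec ∧ ¬span F {x} ≤ b} := by
      intro φ
      obtain ⟨hB1, hB2, hB3⟩ := bmap_memB hx hcompl φ.1 φ.2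
      exact ⟨by rw [hB1, hec], hB2, hB3⟩
    let gA : {v : ↥ec // v ≠ 0} → {a : Submodule F V //
        a ∈ {a : Submodule F V | Module.finrank F ↥a = 1 ∧ ¬a ≤ ec ∧ ¬span F {x} ≤ a}} :=
      fun v => ⟨span F {x + (v.1 : V)}, memA' v⟩
    let gB : {φ : Module.Dual F ↥ec // φ ≠ 0} → {b : Submodule F V //
        b ∈ {b : Submodule F V | Module.finrank F ↥b = n - 1 ∧ ¬b ≤ ec ∧ ¬span F {x} ≤ b}} :=
      fun φ => ⟨LinearMap.range (Tmap x ec φ.1), memB' φ⟩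
    have hgA : Function.Bijective gA := by
      constructor
      · intro v v' h
        exact Subtype.ext (amap_inj hx hcompl (congrArg Subtype.val h))
      · rintro ⟨a, ha1, ha2, ha3⟩
        obtain ⟨v, hv, hva⟩ := amap_surj hx hcompl ha1 ha2 ha3
        exact ⟨⟨v, hv⟩, Subtype.ext hva.symm⟩
    have hgB : Function.Bijective gB := by
      constructor
      · intro φ φ' h
        exact Subtype.ext (bmap_inj hx hcompl (congrArg Subtype.val h))
      · rintro ⟨b, hb1, hb2, hb3⟩
        obtain ⟨φ, hφ, hφb⟩ := bmap_surj hx hcompl hn hn3 hb1 hb2 hb3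
        exact ⟨⟨φ, hφ⟩, Subtype.ext hφb.symm⟩
    let eA := Equiv.ofBijective gA hgA
    let eB := Equiv.ofBijective gB hgB
    let eF := Equiv.ofBijective f hfbij
    refine ⟨eA.symm.trans (eF.trans eB), ?_⟩
    intro a
    set va := eA.symm a with hva
    have h1 : gA va = a := eA.apply_symm_apply a
    have h2 : (a : Submodule F V) = span F {x + (va.1 : V)} := by
      rw [← h1]
    have h3 : (((eA.symm.trans (eF.trans eB)) a : _) : Submodule F V)
        = LinearMap.range (Tmap x ec (f va).1) := rfl
    rw [h2, h3]
    exact (Submodule.span_singleton_le_iff_mem _ _).mpr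
      ((add_mem_range_Tmap hx hcompl).mpr (hfr va))
end

section
/- Let M = (L, r) be a matroid or q-matroid with matroidal weighting w on covers. If z ∈ L is a totally clopen element of M, then: (1) r(z) = 0; (2) the nullity ν(z) = h(z) = ν(1), where 1 is the top of L; (3) h(z) = h(1) − r(1). -/
/-- An element `z` is totally clopen for the rank function `r` if every cover above `z`
has weight `1` and every cover below `z` has weight `0`. -/
def TotallyClopen {L : Type*} [Lattice L] (r : L → ℕ) (z : L) : Prop :=
  (∀ x y : L, x ⋖ y → z ≤ x → r y = r x + 1) ∧
  (∀ x y : L, x ⋖ y → y ≤ z → r y = r x)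

/-- Basic facts about a totally clopen element: `r z = 0`, `ν z = h z = ν ⊤`, and
`h z = h ⊤ - r ⊤`. -/
theorem totallyClopen_facts {L : Type*} [Lattice L] [BoundedOrder L] [Finite L]
    [IsModularLattice L]
    (h : L → ℕ) (hbot : h ⊥ = 0) (hcov : ∀ a b : L, a ⋖ b → h b = h a + 1)
    (r : L → ℕ) (hr1 : ∀ x, r x ≤ h x) (hr2 : Monotone r)
    (hr3 : ∀ x y : L, r (x ⊔ y) + r (x ⊓ y) ≤ r x + r y)
    (z : L) (hz : TotallyClopen r z) :
    r z = 0 ∧ h z - r z = h z ∧ h z - r z = h ⊤ - r ⊤ ∧ h z = h ⊤ - r ⊤ := by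
  have := Fintype.ofFinite L
  obtain ⟨hup, hdown⟩ := hz
  -- r x = 0 for all x ≤ z
  have key1 : ∀ n : ℕ, ∀ x : L, h x ≤ n → x ≤ z → r x = 0 := by
    intro n
    induction n with
    | zero =>
      intro x hx _
      have := hr1 x
      omega
    | succ n ih =>
      intro x hx hxz
      rcases eq_or_lt_of_le (bot_le : (⊥ : L) ≤ x) with hb | hb
      · rw [← hb]
        have := hr1 (⊥ : L)
        omega
      · obtain ⟨y, _, hyx⟩ := exists_le_covBy_of_lt hb
        have h1 : r x = r y := hdown y x hyx hxz
        have h2 : h x = h y + 1 := hcov y x hyx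
        rw [h1]
        exact ih y (by omega) (le_trans hyx.le hxz)
  have hrz : r z = 0 := key1 (h z) z le_rfl le_rfl
  -- r x + h z = h x for all x ≥ z
  have key2 : ∀ n : ℕ, ∀ x : L, h x ≤ n → z ≤ x → r x + h z = h x := by
    intro n
    induction n with
    | zero =>
      intro x hx hzx
      rcases eq_or_lt_of_le hzx with hb | hb
      · rw [← hb, hrz]
        have := hr1 z
        omega
      · obtain ⟨y, hzy, hyx⟩ := exists_le_covBy_of_lt hb
        have := hcov y x hyx
        omega
    | succ n ih =>
      intro x hx hzx
      rcases eq_or_lt_of_le hzx with hb | hb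
      · rw [← hb, hrz]
        omega
      · obtain ⟨y, hzy, hyx⟩ := exists_le_covBy_of_lt hb
        have h1 : r x = r y + 1 := hup y x hyx hzy
        have h2 : h x = h y + 1 := hcov y x hyx
        have := ih y (by omega) hzy
        omega
  have hfin := key2 (h ⊤) ⊤ le_rfl le_top
  refine ⟨hrz, by omega, by omega, by omega⟩
end

section
/- Let M = (L, r) with r a matroidal rank function on a modular lattice L of finite length, and suppose z ∈ L is a totally clopen element. Then z is the unique totally clopen element of M, and the complements of z in L are exactly the bases of M (elements v with h(v) = r(v) = r(1)). -/
section Aux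

variable {L : Type*} [Lattice L] [BoundedOrder L] [Finite L] [IsModularLattice L]

/-- Strict monotonicity of a height-like function. -/
lemma height_strictMono_aux (h : L → ℕ) (hcov : ∀ a b : L, a ⋖ b → h b = h a + 1) :
    ∀ y x : L, x < y → h x < h y := by
  intro y
  induction y using WellFoundedLT.induction with
  | ind y IH =>
    intro x hxy
    obtain ⟨c, hxc, hcy⟩ := exists_le_covBy_of_lt hxy
    have hy := hcov c y hcy
    rcases eq_or_lt_of_le hxc with rfl | hlt
    · omega
    · have := IH c hcy.lt x hlt
      omega

/-- In a modular lattice, a cover `c ⋖ b` with `a ⊓ b ≤ c` pushes up to a cover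
`a ⊔ c ⋖ a ⊔ b` provided `a ⊔ c ≠ a ⊔ b`. -/
lemma covBy_sup_aux {a b c : L} (hcb : c ⋖ b) (hne : a ⊔ c ≠ a ⊔ b) :
    a ⊔ c ⋖ a ⊔ b := by
  refine ⟨lt_of_le_of_ne (sup_le_sup_left hcb.le a) hne, fun t h1 h2 => ?_⟩
  have hat : a ≤ t := le_sup_left.trans h1.le
  have hct : c ≤ t ⊓ b := le_inf (le_sup_right.trans h1.le) hcb.le
  rcases hct.lt_or_eq with hlt3 | heq
  · -- then b ≤ t, so a ⊔ b ≤ t, contradiction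
    have hbt : t ⊓ b = b := by
      by_contra hne2
      exact hcb.2 hlt3 (inf_le_right.lt_of_ne hne2)
    have : a ⊔ b ≤ t := sup_le hat (hbt ▸ inf_le_left)
    exact h2.not_ge this
  · -- t ⊓ b = c; modularity forces t = a ⊔ c
    have hmod : (a ⊔ b) ⊓ t = a ⊔ (b ⊓ t) := sup_inf_assoc_of_le b hat
    have ht : t = a ⊔ c := by
      have h3 : (a ⊔ b) ⊓ t = t := inf_eq_right.2 h2.le
      rw [h3, inf_comm b t, ← heq] at hmod
      exact hmod
    exact h1.ne' ht

/-- A height-like function on a modular lattice is modular. -/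
lemma height_modular_aux (h : L → ℕ) (hcov : ∀ a b : L, a ⋖ b → h b = h a + 1) :
    ∀ b a : L, h (a ⊔ b) + h (a ⊓ b) = h a + h b := by
  intro b
  induction b using WellFoundedLT.induction with
  | ind b IH =>
    intro a
    by_cases hba : b ≤ a
    · rw [sup_eq_left.2 hba, inf_eq_right.2 hba]
    · have hlt : a ⊓ b < b := inf_lt_right.2 hba
      obtain ⟨c, hic, hcb⟩ := exists_le_covBy_of_lt hlt
      have hinf : a ⊓ c = a ⊓ b :=
        le_antisymm (inf_le_inf_left a hcb.le) (le_inf inf_le_left hic)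
      have hne : a ⊔ c ≠ a ⊔ b := by
        intro he
        have hmod : (c ⊔ a) ⊓ b = c ⊔ (a ⊓ b) := sup_inf_assoc_of_le a hcb.le
        rw [sup_eq_left.2 hic] at hmod
        rw [sup_comm c a, he, inf_eq_right.2 le_sup_right] at hmod
        exact hcb.lt.ne' hmod
      have hcovsup : a ⊔ c ⋖ a ⊔ b := covBy_sup_aux hcb hne
      have e1 := hcov _ _ hcovsup
      have e2 := hcov _ _ hcb
      have e3 := IH c hcb.lt a
      rw [hinf] at e3
      omega

/-- `r` vanishes below a totally clopen element. -/
lemma clopen_below_aux (h : L → ℕ) (hbot : h ⊥ = 0) (r : L → ℕ) (hr1 : ∀ x, r x ≤ h x)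
    (z : L) (hz2 : ∀ x y : L, x ⋖ y → y ≤ z → r y = r x) :
    ∀ x : L, x ≤ z → r x = 0 := by
  intro x
  induction x using WellFoundedLT.induction with
  | ind x IH =>
    intro hxz
    rcases (bot_le : (⊥ : L) ≤ x).eq_or_lt with he | hlt
    · have := hr1 x
      rw [← he] at this ⊢
      rw [hbot] at this
      omega
    · obtain ⟨c, _, hcx⟩ := exists_le_covBy_of_lt hlt
      rw [hz2 c x hcx hxz]
      exact IH c hcx.lt (hcx.le.trans hxz)

/-- `r` grows like `h` above a totally clopen element. -/
lemma clopen_above_aux (h : L → ℕ) (hcov : ∀ a b : L, a ⋖ b → h b = h a + 1)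
    (r : L → ℕ) (z : L) (hz1 : ∀ x y : L, x ⋖ y → z ≤ x → r y = r x + 1) :
    ∀ y : L, z ≤ y → r y + h z = r z + h y := by
  intro y
  induction y using WellFoundedLT.induction with
  | ind y IH =>
    intro hzy
    rcases hzy.eq_or_lt with rfl | hlt
    · rfl
    · obtain ⟨c, hzc, hcy⟩ := exists_le_covBy_of_lt hlt
      have e1 := hz1 c y hcy hzc
      have e2 := hcov c y hcy
      have e3 := IH c hcy.lt hzc
      omega

end Aux

/-- A totally clopen element is unique, and its complements are exactly the bases. -/
theorem totallyClopen_unique_and_complements_are_bases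
    {L : Type*} [Lattice L] [BoundedOrder L] [Finite L]
    [IsModularLattice L] [ComplementedLattice L]
    (h : L → ℕ) (hbot : h ⊥ = 0) (hcov : ∀ a b : L, a ⋖ b → h b = h a + 1)
    (r : L → ℕ) (hr1 : ∀ x, r x ≤ h x) (hr2 : Monotone r)
    (hr3 : ∀ x y : L, r (x ⊔ y) + r (x ⊓ y) ≤ r x + r y)
    (hr4 : ∀ a b : L, a ⋖ b → r b = r a ∨ r b = r a + 1)
    (z : L) (hz : TotallyClopen r z) :
    (∀ z' : L, TotallyClopen r z' → z' = z) ∧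
    (∀ v : L, (z ⊓ v = ⊥ ∧ z ⊔ v = ⊤) ↔ (r v = h v ∧ r v = r ⊤)) := by
  have smono := height_strictMono_aux h hcov
  have hmod := height_modular_aux h hcov
  have hbelow := clopen_below_aux h hbot r hr1 z hz.2
  have habove := clopen_above_aux h hcov r z hz.1
  have hz0 : r z = 0 := hbelow z le_rfl
  have hrtop : r ⊤ + h z = h ⊤ := by have := habove ⊤ le_top; omega
  -- r x = r (x ⊔ z) for every x
  have hkey : ∀ x : L, r x = r (x ⊔ z) := by
    intro x
    refine le_antisymm (hr2 le_sup_left) ?_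
    have := hr3 x z
    omega
  constructor
  · -- uniqueness
    intro z' hz'
    have hz'0 : r z' = 0 := clopen_below_aux h hbot r hr1 z' hz'.2 z' le_rfl
    have habove' := clopen_above_aux h hcov r z' hz'.1
    have h2 : r (z' ⊔ z) = 0 := by have := hr3 z' z; omega
    have h1 : r (z' ⊔ z) + h z = r z + h (z' ⊔ z) := habove _ le_sup_right
    have hzz : z' ⊔ z = z := by
      by_contra hne
      have : z < z' ⊔ z := le_sup_right.lt_of_ne (fun he => hne he.symm)
      have := smono _ _ this
      omega
    have hle : z' ≤ z := le_sup_left.trans hzz.le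
    have h3 : r (z' ⊔ z') + h z' = r z' + h (z' ⊔ z') := habove' _ le_sup_right
    have h4 : r (z ⊔ z') + h z' = r z' + h (z ⊔ z') := habove' _ le_sup_right
    rw [sup_comm z z', hzz] at h4
    have hhz : h z = h z' := by rw [hz0] at h4; omega
    rcases hle.eq_or_lt with he | hlt
    · exact he
    · exact absurd (smono _ _ hlt) (by omega)
  · -- complements are exactly the bases
    intro v
    constructor
    · rintro ⟨hinf, hsup⟩
      have hrv : r v = r ⊤ := by rw [hkey v, sup_comm v z, hsup]
      have hm := hmod v z
      rw [hinf, hsup, hbot] at hm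
      refine ⟨?_, hrv⟩
      omega
    · rintro ⟨hrv, hrt⟩
      have h1 : r (v ⊔ z) + h z = r z + h (v ⊔ z) := habove _ le_sup_right
      have h2 : r v = r (v ⊔ z) := hkey v
      have hm := hmod z v
      -- hm : h (v ⊔ z) + h (v ⊓ z) = h v + h z
      have hvz0 : h (v ⊓ z) = 0 := by omega
      have hinf : v ⊓ z = ⊥ := by
        by_contra hne
        have : (⊥ : L) < v ⊓ z := bot_lt_iff_ne_bot.2 hne
        have := smono _ _ this
        omega
      have hsup : v ⊔ z = ⊤ := by
        by_contra hne
        have : v ⊔ z < ⊤ := lt_top_iff_ne_top.2 hne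
        have := smono _ _ this
        omega
      exact ⟨by rw [inf_comm z v]; exact hinf, by rw [sup_comm z v]; exact hsup⟩
end

section
/- Let M = (L, r) be a matroid or q-matroid on a modular complemented lattice L of finite length. There exists a totally clopen element z ∈ L if and only if M is prime-free, i.e., L contains no diamond [a,b] of length 2 in which every cover [a,x] (for a < x < b) has weight 1 and every cover [x,b] has weight 0. -/
/-- A prime diamond: a length-2 interval `[a,b]` in which every cover from the bottom has
weight `1` and every cover to the top has weight `0`. -/
def IsPrimeDiamond {L : Type*} [Lattice L] (h r : L → ℕ) (a b : L) : Prop :=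
  a < b ∧ h b = h a + 2 ∧ ∀ x : L, a < x → x < b → (r x = r a + 1 ∧ r b = r x)

/-!
If `z` is totally clopen, then `r` is constant below `z` and strictly increasing above `z`, so
submodularity and monotonicity give `r x = r (x ⊔ z)` for every `x`. In a prime diamond `[a, b]`
this forces first `z ⊓ b ≤ a` (look at `a ⊔ (z ⊓ b)`), and then `x ⊔ z = b ⊔ z` for a middle
element `x`; the modular law turns the latter into `b = x ⊔ (z ⊓ b) ≤ x`, which is absurd.

Conversely, in a prime-free lattice take `z` maximal with `r z = r ⊥`. Covers below `z` have
weight `0`, covers out of `z` have weight `1`, and weight `1` propagates upwards: if all covers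
out of `x'` have weight `1` and `x' ⋖ x ⋖ y` with `[x, y]` of weight `0`, then `[x', y]` is a
prime diamond.
-/

open Set Relation

section CoverChains

variable {α β : Type*} [PartialOrder α] [LocallyFiniteOrder α]

theorem apply_eq_of_le_of_forall_covBy {f : α → β} {z u : α}
    (hf : ∀ x y, x ⋖ y → y ≤ z → f y = f x) (hu : u ≤ z) : f u = f z := by
  induction le_iff_reflTransGen_covBy.1 hu using ReflTransGen.head_induction_on with
  | refl => rfl
  | head huv hvz ih =>
    have hvz := le_iff_reflTransGen_covBy.2 hvz
    exact (hf _ _ huv hvz).symm.trans (ih hvz)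

theorem strictMonoOn_Ici_of_forall_covBy [Preorder β] {f : α → β} {z : α}
    (hf : ∀ x y, x ⋖ y → z ≤ x → f x < f y) : StrictMonoOn f (Ici z) := by
  rintro x hx y - hxy
  induction transGen_covBy_of_lt hxy with
  | single hcov => exact hf _ _ hcov hx
  | tail hxb hbc ih =>
    have hxb := lt_iff_transGen_covBy.2 hxb
    exact (ih hxb).trans (hf _ _ hbc (hx.trans hxb.le))

end CoverChains

theorem covBy_of_lt_of_lt_of_eq_add_two {α : Type*} [Preorder α] {h : α → ℕ} (hh : StrictMono h)
    {u w v : α} (huw : u < w) (hwv : w < v) (huv : h v = h u + 2) : u ⋖ w := by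
  refine ⟨huw, fun c huc hcw => ?_⟩
  have := hh huc
  have := hh hcw
  have := hh hwv
  omega

namespace TotallyClopen

variable {L : Type*} [Lattice L] [LocallyFiniteOrder L] {r : L → ℕ} {z : L}

theorem rank_eq_of_le (hz : TotallyClopen r z) {u : L} (hu : u ≤ z) : r u = r z :=
  apply_eq_of_le_of_forall_covBy hz.2 hu

theorem strictMonoOn_Ici (hz : TotallyClopen r z) : StrictMonoOn r (Ici z) :=
  strictMonoOn_Ici_of_forall_covBy fun x y hxy hzx => by rw [hz.1 x y hxy hzx]; omega

theorem rank_sup_eq (hz : TotallyClopen r z) (hr2 : Monotone r)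
    (hr3 : ∀ x y : L, r (x ⊔ y) + r (x ⊓ y) ≤ r x + r y) (x : L) : r (x ⊔ z) = r x := by
  have hsub := hr3 x z
  rw [hz.rank_eq_of_le inf_le_right] at hsub
  exact le_antisymm (by omega) (hr2 le_sup_left)

theorem not_isPrimeDiamond [IsModularLattice L] (hz : TotallyClopen r z) {h : L → ℕ}
    (hcov : ∀ a b : L, a ⋖ b → h b = h a + 1) (hr2 : Monotone r)
    (hr3 : ∀ x y : L, r (x ⊔ y) + r (x ⊓ y) ≤ r x + r y) {a b : L} :
    ¬IsPrimeDiamond h r a b := by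
  rintro ⟨hab, hhab, hmid⟩
  have hrank := hz.rank_sup_eq hr2 hr3
  obtain ⟨x, hax, hxb⟩ := exists_lt_lt_of_not_covBy hab fun hc => by
    have := hcov a b hc
    omega
  have hzb : z ⊓ b ≤ a := by
    have hn : r (a ⊔ z ⊓ b) = r a := by
      rw [← hrank, ← hrank a, sup_assoc, sup_of_le_right (inf_le_left : z ⊓ b ≤ z)]
    rcases (le_sup_left : a ≤ a ⊔ z ⊓ b).eq_or_lt with hna | hna
    · exact hna ▸ le_sup_right
    rcases (sup_le hab.le inf_le_right : a ⊔ z ⊓ b ≤ b).eq_or_lt with hnb | hnb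
    · have := hmid x hax hxb
      rw [hnb] at hn
      omega
    · have := (hmid _ hna hnb).1
      omega
  have hxz : x ⊔ z = b ⊔ z := by
    refine (sup_le_sup_right hxb.le z).eq_of_not_lt fun hlt => ?_
    have := hz.strictMonoOn_Ici le_sup_right le_sup_right hlt
    rw [hrank, hrank, (hmid x hax hxb).2] at this
    exact this.false
  have : b ≤ x := calc
    b = (x ⊔ z) ⊓ b := by rw [hxz, inf_eq_right.2 le_sup_left]
    _ = x ⊔ z ⊓ b := sup_inf_assoc_of_le z hxb.le
    _ ≤ x := sup_le le_rfl (hzb.trans hax.le)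
  exact hxb.not_ge this

end TotallyClopen

section PrimeFree

variable {L : Type*} [Lattice L] [LocallyFiniteOrder L] {h r : L → ℕ}

theorem weight_one_of_le_of_primeFree (hcov : ∀ a b : L, a ⋖ b → h b = h a + 1)
    (hr4 : ∀ a b : L, a ⋖ b → r b = r a ∨ r b = r a + 1)
    (hpf : ¬∃ a b : L, IsPrimeDiamond h r a b) {z : L} (hz : ∀ y, z ⋖ y → r y = r z + 1)
    {x : L} (hzx : z ≤ x) : ∀ y, x ⋖ y → r y = r x + 1 := by
  have hh : StrictMono h :=
    (strictMono_iff_forall_covBy h).2 fun a b hab => by rw [hcov a b hab]; omega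
  induction le_iff_reflTransGen_covBy.1 hzx with
  | refl => exact hz
  | @tail x' x hzx' hx'x ih =>
    replace ih := ih (le_iff_reflTransGen_covBy.2 hzx')
    intro y hxy
    refine (hr4 x y hxy).resolve_left fun hrxy => hpf ⟨x', y, hx'x.lt.trans hxy.lt, ?_, ?_⟩
    · rw [hcov x y hxy, hcov x' x hx'x]
    · intro w hx'w hwy
      have hrw := ih w (covBy_of_lt_of_lt_of_eq_add_two hh hx'w hwy
        (by rw [hcov x y hxy, hcov x' x hx'x]))
      have := ih x hx'x
      omega

theorem exists_totallyClopen_of_primeFree [BoundedOrder L]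
    (hcov : ∀ a b : L, a ⋖ b → h b = h a + 1) (hr2 : Monotone r)
    (hr4 : ∀ a b : L, a ⋖ b → r b = r a ∨ r b = r a + 1)
    (hpf : ¬∃ a b : L, IsPrimeDiamond h r a b) : ∃ z, TotallyClopen r z := by
  have hfin : {w : L | r w = r ⊥}.Finite :=
    (finite_Icc ⊥ ⊤).subset fun w _ => ⟨bot_le, le_top⟩
  obtain ⟨z, hz : r z = r ⊥, hzmax⟩ := hfin.exists_maximal ⟨⊥, rfl⟩
  refine ⟨z, fun x y hxy hzx => weight_one_of_le_of_primeFree hcov hr4 hpf ?_ hzx y hxy,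
    fun x y hxy hyz => ?_⟩
  · intro y hzy
    refine (hr4 z y hzy).resolve_left fun hrzy => hzy.lt.not_ge ?_
    exact hzmax (hrzy.trans hz) hzy.le
  · have := hr2 (bot_le : ⊥ ≤ x)
    have := hr2 hxy.le
    have := hr2 hyz
    omega

end PrimeFree

theorem totallyClopen_exists_iff_primeFree_general
    {L : Type*} [Lattice L] [BoundedOrder L] [Finite L]
    [IsModularLattice L]
    (h : L → ℕ) (hcov : ∀ a b : L, a ⋖ b → h b = h a + 1)
    (r : L → ℕ) (hr2 : Monotone r)
    (hr3 : ∀ x y : L, r (x ⊔ y) + r (x ⊓ y) ≤ r x + r y)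
    (hr4 : ∀ a b : L, a ⋖ b → r b = r a ∨ r b = r a + 1) :
    (∃ z : L, TotallyClopen r z) ↔ ¬∃ a b : L, IsPrimeDiamond h r a b := by
  let _ := LocallyFiniteOrder.ofFiniteIcc fun a b : L => (Icc a b).toFinite
  exact ⟨fun ⟨z, hz⟩ ⟨_, _, hab⟩ => hz.not_isPrimeDiamond hcov hr2 hr3 hab,
    exists_totallyClopen_of_primeFree hcov hr2 hr4⟩

/-- A totally clopen element exists if and only if the lattice is prime-free. -/
theorem totallyClopen_exists_iff_primeFree
    {L : Type*} [Lattice L] [BoundedOrder L] [Finite L]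
    [IsModularLattice L] [ComplementedLattice L]
    (h : L → ℕ) (hbot : h ⊥ = 0) (hcov : ∀ a b : L, a ⋖ b → h b = h a + 1)
    (r : L → ℕ) (hr1 : ∀ x, r x ≤ h x) (hr2 : Monotone r)
    (hr3 : ∀ x y : L, r (x ⊔ y) + r (x ⊓ y) ≤ r x + r y)
    (hr4 : ∀ a b : L, a ⋖ b → r b = r a ∨ r b = r a + 1) :
    (∃ z : L, TotallyClopen r z) ↔ ¬∃ a b : L, IsPrimeDiamond h r a b :=
  totallyClopen_exists_iff_primeFree_general h hcov r hr2 hr3 hr4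
end

section
/- Let M = (L, r) be a prime-free matroid or q-matroid with L the subspace lattice of an n-dimensional F_q-vector space, rank ρ = r(1) and nullity ν = n − ρ. Then for each 0 ≤ i ≤ ρ and 0 ≤ j ≤ ν, the number of elements x ∈ L with rank-lack r(1) − r(x) = i and nullity h(x) − r(x) = j equals [ρ choose i]_q [ν choose j]_q q^((ρ−i)(ν−j)). -/
variable (q : ℕ)

lemma gb_zero (n : ℕ) : gaussBinom q n 0 = 1 := by cases n <;> rfl

lemma gb_succ (n k : ℕ) : gaussBinom q (n+1) (k+1) =
    gaussBinom q n k + q ^ (k + 1) * gaussBinom q n (k + 1) := rfl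

lemma gb_of_lt : ∀ {n k : ℕ}, n < k → gaussBinom q n k = 0 := by
  intro n
  induction n with
  | zero => intro k hk; match k, hk with | (m+1), _ => rfl
  | succ n ih =>
    intro k hk
    match k, hk with
    | (k+1), hk =>
      rw [gb_succ, ih (by omega), ih (by omega)]
      ring

lemma gb_diag : ∀ n : ℕ, gaussBinom q n n = 1 := by
  intro n
  induction n with
  | zero => rfl
  | succ n ih => rw [gb_succ, ih, gb_of_lt q (by omega)]; ring

lemma gb_rec2 : ∀ n k : ℕ, k ≤ n → gaussBinom q (n+1) (k+1) =
    q ^ (n - k) * gaussBinom q n k + gaussBinom q n (k+1) := by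
  intro n
  induction n with
  | zero => intro k hk; interval_cases k; simp [gaussBinom]
  | succ n ih =>
    intro k hk
    match k with
    | 0 =>
      calc gaussBinom q (n+2) 1 = 1 + q * gaussBinom q (n+1) 1 := by
            rw [gb_succ, gb_zero]; ring
        _ = 1 + q * (q ^ (n-0) * gaussBinom q n 0 + gaussBinom q n 1) := by
            rw [ih 0 (by omega)]
        _ = q ^ (n+1) + (1 + q * gaussBinom q n 1) := by rw [Nat.sub_zero, gb_zero]; ring
        _ = q ^ (n+1-0) * gaussBinom q (n+1) 0 + gaussBinom q (n+1) 1 := by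
            rw [gb_succ, gb_zero, gb_zero, Nat.sub_zero]; ring
    | (k+1) =>
      rcases eq_or_lt_of_le hk with h | h
      · have hk1 : k = n := by omega
        subst hk1
        rw [gb_diag, gb_of_lt q (show k+1 < k+2 by omega), Nat.sub_self, gb_diag]
        ring
      · have hk' : k ≤ n := by omega
        have hk2 : k + 1 ≤ n := by omega
        calc gaussBinom q (n+2) (k+2)
            = gaussBinom q (n+1) (k+1) + q ^ (k+2) * gaussBinom q (n+1) (k+2) := gb_succ ..
          _ = (q ^ (n-k) * gaussBinom q n k + gaussBinom q n (k+1)) +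
              q ^ (k+2) * (q ^ (n-(k+1)) * gaussBinom q n (k+1) + gaussBinom q n (k+2)) := by
              rw [ih k hk', ih (k+1) hk2]
          _ = q ^ (n-k) * (gaussBinom q n k + q ^ (k+1) * gaussBinom q n (k+1)) +
              (gaussBinom q n (k+1) + q ^ (k+2) * gaussBinom q n (k+2)) := by
              have e1 : q ^ (k+2) * q ^ (n - (k+1)) = q ^ (n - k) * q ^ (k+1) := by
                rw [← pow_add, ← pow_add]; congr 1; omega
              nlinarith [e1]
          _ = q ^ (n+1-(k+1)) * gaussBinom q (n+1) (k+1) + gaussBinom q (n+1) (k+2) := by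
              rw [gb_succ q n k, gb_succ q n (k+1), show n+1-(k+1) = n-k by omega]

lemma gb_symm : ∀ n k : ℕ, k ≤ n → gaussBinom q n k = gaussBinom q n (n - k) := by
  intro n
  induction n with
  | zero => intro k hk; interval_cases k; rfl
  | succ n ih =>
    intro k hk
    match k with
    | 0 => rw [gb_zero, Nat.sub_zero, gb_diag]
    | (k+1) =>
      rcases eq_or_lt_of_le hk with h | h
      · have hk1 : k = n := by omega
        subst hk1
        rw [gb_diag, Nat.sub_self, gb_zero]
      · have hk' : k + 1 ≤ n := by omega
        have hm : n + 1 - (k+1) = (n - (k+1)) + 1 := by omega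
        calc gaussBinom q (n+1) (k+1)
            = q ^ (n-k) * gaussBinom q n k + gaussBinom q n (k+1) := gb_rec2 q n k (by omega)
          _ = q ^ (n-(k+1)+1) * gaussBinom q n (n-k) + gaussBinom q n (n-(k+1)) := by
              rw [ih k (by omega), ih (k+1) hk', show n-k = n-(k+1)+1 by omega]
          _ = gaussBinom q n (n-(k+1)) + q ^ ((n-(k+1))+1) * gaussBinom q n ((n-(k+1))+1) := by
              rw [show n-(k+1)+1 = n-k by omega]; ring
          _ = gaussBinom q (n+1) (n+1-(k+1)) := by rw [hm]; exact (gb_succ ..).symm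


open Module Submodule
set_option maxHeartbeats 1000000


set_option linter.unusedSectionVars false
section
variable {F : Type*} [Field F] [Fintype F] {V : Type*} [AddCommGroup V] [Module F V]
  [FiniteDimensional F V]

lemma aux_finiteV (F V : Type*) [Field F] [Fintype F] [AddCommGroup V] [Module F V]
    [FiniteDimensional F V] : Finite V := Module.finite_of_finite F


lemma aux_finiteSub : Finite (Submodule F V) := by
  haveI : Finite V := aux_finiteV F V
  exact Finite.of_injective (fun p => (p : Set V)) SetLike.coe_injective

/-- step up by one dimension -/
lemma aux_step {p x : Submodule F V} (h : p ≤ x) (hlt : finrank F p < finrank F x) :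
    ∃ p', p ≤ p' ∧ p' ≤ x ∧ finrank F p' = finrank F p + 1 := by
  have hne : p ≠ x := fun e => by rw [e] at hlt; omega
  obtain ⟨v, hvx, hvp⟩ := SetLike.exists_of_lt (lt_of_le_of_ne h hne)
  have hv0 : v ≠ 0 := fun e => hvp (e ▸ p.zero_mem)
  refine ⟨p ⊔ F ∙ v, le_sup_left, sup_le h ((span_singleton_le_iff_mem v x).2 hvx), ?_⟩
  have hinf : p ⊓ (F ∙ v) = ⊥ := by
    rw [eq_bot_iff]
    rintro w ⟨hwp, hws⟩
    obtain ⟨a, rfl⟩ := mem_span_singleton.1 hws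
    rcases eq_or_ne a 0 with rfl | ha
    · simp
    · have : a⁻¹ • a • v ∈ p := smul_mem p a⁻¹ hwp
      rw [smul_smul, inv_mul_cancel₀ ha, one_smul] at this
      exact absurd this hvp
  have := Submodule.finrank_sup_add_finrank_inf_eq p (F ∙ v)
  rw [hinf, finrank_bot, finrank_span_singleton hv0] at this
  omega

lemma aux_between {p x : Submodule F V} (h : p ≤ x) :
    ∀ d, finrank F p ≤ d → d ≤ finrank F x → ∃ a, p ≤ a ∧ a ≤ x ∧ finrank F a = d := by
  intro d
  induction d with
  | zero => intro h1 h2; exact ⟨p, le_rfl, h, by omega⟩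
  | succ d ih =>
    intro h1 h2
    rcases Nat.lt_or_ge (finrank F p) (d+1) with hlt | hge
    · obtain ⟨a, hpa, hax, ha⟩ := ih (by omega) (by omega)
      obtain ⟨a', haa', ha'x, ha'⟩ := aux_step hax (by omega)
      exact ⟨a', hpa.trans haa', ha'x, by omega⟩
    · exact ⟨p, le_rfl, h, by omega⟩

/-- rank-nullity for the quotient map restricted to a submodule -/
lemma aux_rn (c x : Submodule F V) :
    finrank F (x.map c.mkQ) + finrank F ↥(x ⊓ c) = finrank F x := by
  have h1 := LinearMap.finrank_range_add_finrank_ker (c.mkQ ∘ₗ x.subtype)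
  have h2 : LinearMap.range (c.mkQ ∘ₗ x.subtype) = x.map c.mkQ := by
    rw [LinearMap.range_comp, range_subtype]
  have h3 : LinearMap.ker (c.mkQ ∘ₗ x.subtype) = comap x.subtype (x ⊓ c) := by
    rw [LinearMap.ker_comp, ker_mkQ]
    ext v; simp [v.2]
  have h4 : finrank F ↥(comap x.subtype (x ⊓ c)) = finrank F ↥(x ⊓ c) :=
    (Submodule.comapSubtypeEquivOfLe inf_le_left).finrank_eq
  rw [h2, h3, h4] at h1
  exact h1



lemma aux_lift_count (c a : Submodule F V) (ha : a ≤ c) (b : Submodule F (V ⧸ c)) :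
    Nat.card {x : Submodule F V // x ⊓ c = a ∧ x.map c.mkQ = b} =
      Fintype.card F ^ (finrank F b * (finrank F c - finrank F a)) := by
  classical
  obtain ⟨σ, hσ⟩ := c.mkQ.exists_rightInverse_of_surjective (range_mkQ c)
  have hσ' : ∀ u : V ⧸ c, c.mkQ (σ u) = u := fun u => by
    have := LinearMap.congr_fun hσ u; simpa using this
  set A : Submodule F ↥c := a.comap c.subtype with hA
  obtain ⟨B, hAB⟩ := A.exists_isCompl
  have hmapA : A.map c.subtype = a := by
    rw [hA, map_comap_subtype, inf_eq_right.2 ha]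
  -- the parametrizing space
  set T := (↥b →ₗ[F] ↥B) with hT
  -- the linear map attached to f : T
  set G : T → (↥b →ₗ[F] V) :=
    fun f => (σ ∘ₗ b.subtype) + (c.subtype ∘ₗ B.subtype ∘ₗ f) with hG
  have hGapp : ∀ (f : T) (w : ↥b), G f w = σ ↑w + ((f w : ↥c) : V) := fun f w => rfl
  have hπG : ∀ (f : T) (w : ↥b), c.mkQ (G f w) = (w : V ⧸ c) := by
    intro f w
    rw [hGapp, map_add, hσ']
    have h0 : c.mkQ ((f w : ↥c) : V) = 0 :=
      (Submodule.Quotient.mk_eq_zero c).2 (f w : ↥c).2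
    rw [h0, add_zero]
  have hmk0 : ∀ v ∈ c, c.mkQ v = 0 := fun v hv => by
    rw [Submodule.mkQ_apply]; exact (Submodule.Quotient.mk_eq_zero c).2 hv
  set Φ : T → Submodule F V := fun f => a ⊔ LinearMap.range (G f) with hΦ
  have hmapΦ : ∀ f : T, (Φ f).map c.mkQ = b := by
    intro f
    rw [hΦ]
    simp only
    rw [Submodule.map_sup]
    have h1 : a.map c.mkQ = ⊥ := by
      rw [eq_bot_iff]
      rintro u ⟨v, hv, rfl⟩
      exact (Submodule.Quotient.mk_eq_zero c).1 (by rw [← Submodule.mkQ_apply]; exact hmk0 v (ha hv)) |> fun h => by simp [hmk0 v (ha hv)]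
    have h2 : (LinearMap.range (G f)).map c.mkQ = b := by
      rw [← LinearMap.range_comp]
      have he : c.mkQ ∘ₗ G f = b.subtype := by
        apply LinearMap.ext; intro w
        rw [LinearMap.comp_apply, hπG]; rfl
      rw [he, range_subtype]
    rw [h1, h2, bot_sup_eq]
  have hinfΦ : ∀ f : T, (Φ f) ⊓ c = a := by
    intro f
    apply le_antisymm
    · rintro v hv
      obtain ⟨hv1, hv2⟩ := Submodule.mem_inf.1 hv
      obtain ⟨α, hα, u, hu, rfl⟩ := Submodule.mem_sup.1 hv1
      obtain ⟨w, rfl⟩ := hu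
      have hq : c.mkQ (α + G f w) = 0 := (Submodule.Quotient.mk_eq_zero c).2 hv2
      rw [map_add, hπG, hmk0 α (ha hα), zero_add] at hq
      have hw0 : w = 0 := Subtype.ext hq
      rw [hw0, map_zero, add_zero]
      exact hα
    · exact le_inf le_sup_left ha
  have hΦinj : Function.Injective Φ := by
    intro f f' he
    apply LinearMap.ext; intro w
    have h1 : G f w ∈ Φ f' := by
      rw [← he]; exact Submodule.mem_sup_right (LinearMap.mem_range_self _ w)
    obtain ⟨α, hα, u, hu, heq⟩ := Submodule.mem_sup.1 h1
    obtain ⟨w', rfl⟩ := hu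
    have hq : (w : V ⧸ c) = (w' : V ⧸ c) := by
      have := congrArg c.mkQ heq
      rw [map_add, hπG, hπG, hmk0 α (ha hα), zero_add] at this
      exact this.symm
    have hww' : w = w' := Subtype.ext hq
    subst hww'
    -- now σ w + f' w = α + (σ w + f w)  (heq : α + G f' w = G f w)
    have hd : ((f w : ↥c) : V) - ((f' w : ↥c) : V) = α := by
      have h2 := heq
      rw [hGapp, hGapp] at h2
      have h3 : α = σ ↑w + ((f w : ↥c) : V) - (σ ↑w + ((f' w : ↥c) : V)) :=
        eq_sub_of_add_eq h2
      rw [h3]; abel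
    have hu : ((f w : ↥c) - (f' w : ↥c) : ↥c) ∈ A := by
      rw [hA, Submodule.mem_comap]
      have : (((f w : ↥c) - (f' w : ↥c) : ↥c) : V) = α := by
        rw [Submodule.coe_sub]; exact hd
      rw [Submodule.coe_subtype, this]
      exact hα
    have hu' : ((f w : ↥c) - (f' w : ↥c) : ↥c) ∈ B := sub_mem (f w).2 (f' w).2
    have h0 : ((f w : ↥c) - (f' w : ↥c) : ↥c) = 0 := by
      have := hAB.inf_eq_bot
      have hm : ((f w : ↥c) - (f' w : ↥c) : ↥c) ∈ A ⊓ B := ⟨hu, hu'⟩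
      rw [this] at hm
      exact hm
    exact Subtype.ext (sub_eq_zero.1 h0)
  have hrangele : ∀ (f : T) (x : Submodule F V), x ⊓ c = a → Φ f ≤ x → True := fun _ _ _ _ => trivial
  have hΦsurj : ∀ x : Submodule F V, x ⊓ c = a → x.map c.mkQ = b → ∃ f, Φ f = x := by
    intro x hx1 hx2
    have hax : a ≤ x := hx1 ▸ inf_le_left
    have hmem : ∀ v : ↥x, c.mkQ ↑v ∈ b := fun v => hx2 ▸ Submodule.mem_map_of_mem v.2
    set πx : ↥x →ₗ[F] ↥b := LinearMap.codRestrict b (c.mkQ ∘ₗ x.subtype) (fun v => hmem v)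
      with hπx
    have hπxval : ∀ v : ↥x, ((πx v : ↥b) : V ⧸ c) = c.mkQ ↑v := fun v => rfl
    have hπxsurj : LinearMap.range πx = ⊤ := by
      rw [LinearMap.range_eq_top]
      intro w
      have hw : (w : V ⧸ c) ∈ x.map c.mkQ := hx2.symm ▸ w.2
      obtain ⟨v, hv, hvw⟩ := hw
      exact ⟨⟨v, hv⟩, Subtype.ext hvw⟩
    obtain ⟨s, hs⟩ := πx.exists_rightInverse_of_surjective hπxsurj
    have hs' : ∀ w : ↥b, πx (s w) = w := fun w => by
      have := LinearMap.congr_fun hs w; simpa using this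
    have hπs : ∀ w : ↥b, c.mkQ ((s w : ↥x) : V) = (w : V ⧸ c) := fun w => by
      rw [← hπxval (s w), hs' w]
    set h0 : ↥b →ₗ[F] V := (x.subtype ∘ₗ s) - (σ ∘ₗ b.subtype) with hh0
    have hh0app : ∀ w : ↥b, h0 w = ((s w : ↥x) : V) - σ ↑w := fun w => rfl
    have hh0mem : ∀ w, h0 w ∈ c := by
      intro w
      have hq : c.mkQ (h0 w) = 0 := by
        rw [hh0app, map_sub, hπs w, hσ', sub_self]
      rw [Submodule.mkQ_apply] at hq
      exact (Submodule.Quotient.mk_eq_zero c).1 hq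
    set h1 : ↥b →ₗ[F] ↥c := LinearMap.codRestrict c h0 hh0mem with hh1
    set projB : ↥c →ₗ[F] ↥B := B.linearProjOfIsCompl A hAB.symm with hprojB
    set f : T := projB ∘ₗ h1 with hf
    have hGfx : ∀ w : ↥b, G f w ∈ x := by
      intro w
      have hdecomp :
          ((A.linearProjOfIsCompl B hAB (h1 w) : ↥c) : V) + ((projB (h1 w) : ↥c) : V)
            = h0 w := by
        have := Submodule.projection_add_projection_eq_self hAB (h1 w)
        have h2 := congrArg (Subtype.val) this
        rw [Submodule.coe_add] at h2
        rw [hprojB]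
        exact h2
      have hGf : G f w = σ ↑w + ((projB (h1 w) : ↥c) : V) := hGapp f w
      have : G f w = ((s w : ↥x) : V) - ((A.linearProjOfIsCompl B hAB (h1 w) : ↥c) : V) := by
        rw [hGf]
        have := hdecomp
        rw [hh0app] at this
        linear_combination (norm := abel) this
      rw [this]
      apply sub_mem (s w).2
      have hmemA : ((A.linearProjOfIsCompl B hAB (h1 w) : ↥c) : V) ∈ a := by
        rw [← hmapA]
        exact ⟨_, (A.linearProjOfIsCompl B hAB (h1 w)).2, rfl⟩
      exact hax hmemA
    refine ⟨f, le_antisymm ?_ ?_⟩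
    · apply sup_le hax
      rintro u ⟨w, rfl⟩
      exact hGfx w
    · intro v hv
      set w : ↥b := πx ⟨v, hv⟩ with hw
      have hvc : v - G f w ∈ c := by
        have hq : c.mkQ (v - G f w) = 0 := by
          rw [map_sub, hπG, hw, hπxval]
          exact sub_self _
        rw [Submodule.mkQ_apply] at hq
        exact (Submodule.Quotient.mk_eq_zero c).1 hq
      have hva : v - G f w ∈ a := by
        rw [← hx1]
        exact ⟨sub_mem hv (hGfx w), hvc⟩
      have : v = (v - G f w) + G f w := by abel
      rw [this]
      exact Submodule.add_mem_sup hva (LinearMap.mem_range_self _ w)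
  -- conclude via the bijection
  have hbij : Function.Bijective
      (fun f : T => (⟨Φ f, hinfΦ f, hmapΦ f⟩ :
        {x : Submodule F V // x ⊓ c = a ∧ x.map c.mkQ = b})) := by
    constructor
    · intro f f' he
      exact hΦinj (congrArg Subtype.val he)
    · rintro ⟨x, hx1, hx2⟩
      obtain ⟨f, hf⟩ := hΦsurj x hx1 hx2
      exact ⟨f, Subtype.ext hf⟩
  rw [← Nat.card_eq_of_bijective _ hbij]
  haveI : Finite V := Module.finite_of_finite F
  haveI : Finite T := Module.finite_of_finite F
  haveI : Fintype T := Fintype.ofFinite T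
  rw [Nat.card_eq_fintype_card, card_eq_pow_finrank (K := F) (V := T)]
  congr 1
  rw [Module.finrank_linearMap]
  congr 1
  have hcompl := Submodule.finrank_add_eq_of_isCompl hAB
  have hAa : finrank F ↥A = finrank F ↥a := by
    rw [hA]
    exact (Submodule.comapSubtypeEquivOfLe ha).finrank_eq
  omega



lemma aux_card_sigma {ι : Type*} [Finite ι] (f : ι → Type*) [∀ i, Finite (f i)] :
    Nat.card (Σ i, f i) = ∑ᶠ i, Nat.card (f i) := by
  classical
  haveI : Fintype ι := Fintype.ofFinite ι
  haveI : ∀ i, Fintype (f i) := fun i => Fintype.ofFinite (f i)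
  rw [Nat.card_eq_fintype_card, Fintype.card_sigma, finsum_eq_sum_of_fintype]
  simp [Nat.card_eq_fintype_card]

lemma aux_count_fiber (c : Submodule F V) (j k : ℕ)
    (hlift : ∀ a : Submodule F V, a ≤ c → ∀ b : Submodule F (V ⧸ c),
      Nat.card {x : Submodule F V // x ⊓ c = a ∧ x.map c.mkQ = b} =
        Fintype.card F ^ (finrank F b * (finrank F c - finrank F a))) :
    Nat.card {x : Submodule F V // finrank F ↥(x ⊓ c) = j ∧ finrank F (x.map c.mkQ) = k} =
      Nat.card {a : Submodule F V // a ≤ c ∧ finrank F ↥a = j} *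
        Nat.card {b : Submodule F (V ⧸ c) // finrank F ↥b = k} *
        Fintype.card F ^ (k * (finrank F c - j)) := by
  classical
  haveI : Finite V := Module.finite_of_finite F
  haveI : Finite (Submodule F V) := Finite.of_injective (fun p => (p : Set V)) SetLike.coe_injective
  haveI : Finite (V ⧸ c) := Quotient.finite _
  haveI : Finite (Submodule F (V ⧸ c)) :=
    Finite.of_injective (fun p => (p : Set (V ⧸ c))) SetLike.coe_injective
  set S := {x : Submodule F V // finrank F ↥(x ⊓ c) = j ∧ finrank F (x.map c.mkQ) = k} with hS
  set A := {a : Submodule F V // a ≤ c ∧ finrank F ↥a = j} with hA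
  set B := {b : Submodule F (V ⧸ c) // finrank F ↥b = k} with hB
  set φ : S → A × B := fun x =>
    ⟨⟨x.1 ⊓ c, inf_le_right, x.2.1⟩, ⟨x.1.map c.mkQ, x.2.2⟩⟩ with hφ
  have h1 : Nat.card S = ∑ᶠ p : A × B, Nat.card {x : S // φ x = p} := by
    calc Nat.card S = Nat.card (Σ p : A × B, {x : S // φ x = p}) :=
          Nat.card_congr (Equiv.sigmaFiberEquiv φ).symm
      _ = ∑ᶠ p : A × B, Nat.card {x : S // φ x = p} := aux_card_sigma _
  have h2 : ∀ p : A × B, Nat.card {x : S // φ x = p} =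
      Fintype.card F ^ (k * (finrank F c - j)) := by
    intro p
    have e : {x : S // φ x = p} ≃
        {x : Submodule F V // x ⊓ c = p.1.1 ∧ x.map c.mkQ = p.2.1} := by
      refine ⟨fun x => ⟨x.1.1, ?_, ?_⟩, fun x => ⟨⟨x.1, ?_, ?_⟩, ?_⟩, ?_, ?_⟩
      · have := congrArg (fun y => (Prod.fst y).1) x.2
        exact this
      · have := congrArg (fun y => (Prod.snd y).1) x.2
        exact this
      · rw [x.2.1]; exact p.1.2.2
      · rw [x.2.2]; exact p.2.2
      · apply Prod.ext
        · exact Subtype.ext x.2.1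
        · exact Subtype.ext x.2.2
      · intro x; apply Subtype.ext; apply Subtype.ext; rfl
      · intro x; apply Subtype.ext; rfl
    rw [Nat.card_congr e, hlift p.1.1 p.1.2.1 p.2.1, p.1.2.2, p.2.2]
  rw [h1]
  rw [finsum_congr h2]
  haveI : Fintype A := Fintype.ofFinite _
  haveI : Fintype B := Fintype.ofFinite _
  rw [finsum_eq_sum_of_fintype, Finset.sum_const, Finset.card_univ]
  rw [Fintype.card_prod]
  simp [Nat.card_eq_fintype_card, mul_assoc, smul_eq_mul]

lemma aux_card_unique {α : Type*} (p : α → Prop) (a : α) (h : p a)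
    (huniq : ∀ x, p x → x = a) : Nat.card {x // p x} = 1 := by
  haveI : Unique {x // p x} := ⟨⟨⟨a, h⟩⟩, fun y => Subtype.ext (huniq y.1 y.2)⟩
  exact Nat.card_unique

lemma aux_grass : ∀ (n : ℕ) (W : Type u_2) (_ : AddCommGroup W) (_ : Module F W)
    (_ : FiniteDimensional F W), finrank F W = n → ∀ k : ℕ,
    Nat.card {x : Submodule F W // finrank F ↥x = k} = gaussBinom (Fintype.card F) n k := by
  intro n
  induction n with
  | zero =>
    intro W _ _ _ hW k
    match k with
    | 0 =>
      rw [gb_zero]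
      refine aux_card_unique _ ⊥ (finrank_bot F W) ?_
      intro x hx
      exact Submodule.finrank_eq_zero.1 hx
    | (k+1) =>
      rw [gb_of_lt _ (by omega)]
      haveI : IsEmpty {x : Submodule F W // finrank F ↥x = k + 1} := by
        refine ⟨fun x => ?_⟩
        have := Submodule.finrank_le x.1
        omega
      exact Nat.card_of_isEmpty
  | succ n ih =>
    intro W _ _ _ hW k
    match k with
    | 0 =>
      rw [gb_zero]
      refine aux_card_unique _ ⊥ (finrank_bot F W) ?_
      intro x hx
      exact Submodule.finrank_eq_zero.1 hx
    | (k+1) =>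
      haveI : Nontrivial W := by
        apply Module.nontrivial_of_finrank_pos (R := F)
        omega
      obtain ⟨v, hv⟩ := exists_ne (0 : W)
      set l : Submodule F W := F ∙ v with hl
      have hl1 : finrank F ↥l = 1 := finrank_span_singleton hv
      have hql : finrank F (W ⧸ l) = n := by
        have := Submodule.finrank_quotient_add_finrank l
        omega
      have hrn : ∀ x : Submodule F W,
          finrank F (x.map l.mkQ) + finrank F ↥(x ⊓ l) = finrank F ↥x := fun x => aux_rn l x
      have hinfle : ∀ x : Submodule F W, finrank F ↥(x ⊓ l) ≤ 1 := by
        intro x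
        have := Submodule.finrank_mono (inf_le_right : x ⊓ l ≤ l)
        omega
      -- split the counting set in two
      set P : Submodule F W → Prop := fun x => finrank F ↥x = k + 1 with hP
      set Q : Submodule F W → Prop := fun x => finrank F ↥(x ⊓ l) = 1 with hQ
      classical
      have hsplit : Nat.card {x : Submodule F W // P x} =
          Nat.card {x : Submodule F W // finrank F ↥(x ⊓ l) = 1 ∧
              finrank F (x.map l.mkQ) = k} +
          Nat.card {x : Submodule F W // finrank F ↥(x ⊓ l) = 0 ∧
              finrank F (x.map l.mkQ) = k + 1} := by
        haveI : Finite W := Module.finite_of_finite F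
        haveI : Finite (Submodule F W) :=
          Finite.of_injective (fun p => (p : Set W)) SetLike.coe_injective
        have e1 : {x : Submodule F W // P x} ≃
            {y : {x : Submodule F W // P x} // Q y.1} ⊕
            {y : {x : Submodule F W // P x} // ¬ Q y.1} := (Equiv.sumCompl _).symm
        rw [Nat.card_congr e1, Nat.card_sum]
        congr 1
        · refine Nat.card_congr (((Equiv.subtypeSubtypeEquivSubtypeInter P Q).trans
            (Equiv.subtypeEquivRight ?_)))
          intro x
          constructor
          · rintro ⟨h1, h2⟩
            have := hrn x
            exact ⟨h2, by omega⟩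
          · rintro ⟨h1, h2⟩
            have := hrn x
            exact ⟨by omega, h1⟩
        · refine Nat.card_congr (((Equiv.subtypeSubtypeEquivSubtypeInter P (fun x => ¬ Q x)).trans
            (Equiv.subtypeEquivRight ?_)))
          intro x
          have h3 := hinfle x
          have h4 := hrn x
          constructor
          · rintro ⟨h1, h2⟩
            have h5 : finrank F ↥(x ⊓ l) = 0 := by
              rcases Nat.lt_or_ge (finrank F ↥(x ⊓ l)) 1 with h | h
              · omega
              · exact absurd (by omega) h2
            exact ⟨h5, by omega⟩
          · rintro ⟨h1, h2⟩
            refine ⟨by omega, ?_⟩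
            rw [hQ]
            omega
      rw [hsplit]
      have hc1 := aux_count_fiber l 1 k (fun a ha b => aux_lift_count l a ha b)
      have hc2 := aux_count_fiber l 0 (k+1) (fun a ha b => aux_lift_count l a ha b)
      rw [hc1, hc2, hl1]
      have ha1 : Nat.card {a : Submodule F W // a ≤ l ∧ finrank F ↥a = 1} = 1 := by
        refine aux_card_unique _ l ⟨le_rfl, hl1⟩ ?_
        rintro x ⟨hx1, hx2⟩
        exact Submodule.eq_of_le_of_finrank_le hx1 (by omega)
      have ha0 : Nat.card {a : Submodule F W // a ≤ l ∧ finrank F ↥a = 0} = 1 := by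
        refine aux_card_unique _ ⊥ ⟨bot_le, finrank_bot F W⟩ ?_
        rintro x ⟨hx1, hx2⟩
        exact Submodule.finrank_eq_zero.1 hx2
      rw [ha1, ha0, ih (W ⧸ l) _ _ inferInstance hql k, ih (W ⧸ l) _ _ inferInstance hql (k+1), gb_succ]
      ring
lemma aux_struct (r : Submodule F V → ℕ)
    (hr1 : ∀ x : Submodule F V, r x ≤ finrank F ↥x)
    (hr2 : Monotone r)
    (hr3 : ∀ x y : Submodule F V, r (x ⊔ y) + r (x ⊓ y) ≤ r x + r y)
    (hpf : ¬∃ a b : Submodule F V, a < b ∧ finrank F ↥b = finrank F ↥a + 2 ∧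
        ∀ x : Submodule F V, a < x → x < b → (r x = r a + 1 ∧ r b = r x)) :
    ∃ c : Submodule F V, r c = 0 ∧ (∀ x, r x = 0 → x ≤ c) ∧
      ∀ x, r x + finrank F ↥(x ⊓ c) = finrank F ↥x := by
  classical
  haveI : Finite V := Module.finite_of_finite F
  haveI : Finite (Submodule F V) :=
    Finite.of_injective (fun p => (p : Set V)) SetLike.coe_injective
  haveI : Fintype (Submodule F V) := Fintype.ofFinite _
  set Z : Finset (Submodule F V) := Finset.univ.filter (fun x => r x = 0) with hZ
  set c : Submodule F V := Z.sup id with hc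
  have hrbot : r ⊥ = 0 := by have := hr1 ⊥; rw [finrank_bot F V] at this; omega
  have hrc : r c = 0 := by
    rw [hc]
    apply Finset.sup_induction (p := fun y => r y = 0)
    · exact hrbot
    · intro x hx y hy
      have := hr3 x y
      omega
    · intro x hxZ
      simpa [hZ] using (Finset.mem_filter.1 hxZ).2
  have hmax : ∀ x, r x = 0 → x ≤ c := by
    intro x hx
    exact Finset.le_sup (f := id) (by simp [hZ, hx])
  have hub : ∀ x, r x + finrank F ↥(x ⊓ c) ≤ finrank F ↥x := by
    intro x
    set A := (x ⊓ c).comap x.subtype with hA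
    obtain ⟨B, hAB⟩ := A.exists_isCompl
    set w := B.map x.subtype with hw
    have hmapA : A.map x.subtype = x ⊓ c := by
      rw [hA, map_comap_subtype, inf_eq_right.2 inf_le_left]
    have hsup : (x ⊓ c) ⊔ w = x := by
      rw [← hmapA, hw, ← Submodule.map_sup, hAB.sup_eq_top, Submodule.map_subtype_top]
    have hxle : x ≤ w ⊔ c := by
      conv_lhs => rw [← hsup]
      exact sup_le (le_trans inf_le_right le_sup_right) le_sup_left
    have h1 : r x ≤ r (w ⊔ c) := hr2 hxle
    have h2 : r (w ⊔ c) ≤ r w := by have := hr3 w c; omega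
    have h3 : r w ≤ finrank F ↥w := hr1 w
    have h4 : finrank F ↥w = finrank F ↥B := Submodule.finrank_map_subtype_eq x B
    have h5 := Submodule.finrank_add_eq_of_isCompl hAB
    have h6 : finrank F ↥A = finrank F ↥(x ⊓ c) :=
      (Submodule.comapSubtypeEquivOfLe (inf_le_left : x ⊓ c ≤ x)).finrank_eq
    omega
  refine ⟨c, hrc, hmax, ?_⟩
  suffices h : ∀ (d : ℕ) (x : Submodule F V), finrank F ↥x ≤ d → r x + finrank F ↥(x ⊓ c) = finrank F ↥x by
    intro x; exact h (finrank F ↥x) x le_rfl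
  intro d
  induction d with
  | zero =>
    intro x hx
    have h1 := hr1 x
    have h2 : finrank F ↥(x ⊓ c) ≤ finrank F ↥x := Submodule.finrank_mono inf_le_left
    omega
  | succ d ih =>
    intro x hx
    rcases Nat.lt_or_ge (finrank F ↥x) (d+1) with hlt | hge
    · exact ih x (by omega)
    have hxd : finrank F ↥x = d + 1 := by omega
    by_contra hne
    have hub' := hub x
    have hminf : finrank F ↥(x ⊓ c) ≤ finrank F ↥x := Submodule.finrank_mono inf_le_left
    have hlt2 : r x + finrank F ↥(x ⊓ c) < finrank F ↥x := by omega
    have hmne : finrank F ↥(x ⊓ c) ≠ finrank F ↥x := by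
      intro he
      omega
    have hm2 : finrank F ↥(x ⊓ c) + 2 ≤ finrank F ↥x := by
      by_contra hcon
      have hrx0 : r x = 0 := by omega
      have hxc : x ≤ c := by
        have h1 := hr3 x c
        have h2 : r (x ⊔ c) = 0 := by omega
        exact le_trans le_sup_left (hmax _ h2)
      have : finrank F ↥(x ⊓ c) = finrank F ↥x := by rw [inf_eq_left.2 hxc]
      exact hmne this
    obtain ⟨a, hxca, hax, hfa⟩ := aux_between (inf_le_left : x ⊓ c ≤ x)
      (finrank F ↥x - 2) (by omega) (by omega)
    have hzc : ∀ z : Submodule F V, a ≤ z → z ≤ x → z ⊓ c = x ⊓ c := by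
      intro z h1 h2
      apply le_antisymm
      · exact inf_le_inf_right c h2
      · exact le_inf (le_trans hxca h1) inf_le_right
    have hz : ∀ z : Submodule F V, a ≤ z → z ≤ x → z ≠ x →
        r z + finrank F ↥(x ⊓ c) = finrank F ↥z := by
      intro z h1 h2 h3
      have hzlt : finrank F ↥z < finrank F ↥x :=
        Submodule.finrank_lt_finrank_of_lt (lt_of_le_of_ne h2 h3)
      have h4 := ih z (by omega)
      rw [hzc z h1 h2] at h4
      exact h4
    have hane : a ≠ x := by intro he; rw [he] at hfa; omega
    have hra : r a + finrank F ↥(x ⊓ c) = finrank F ↥x - 2 := by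
      have := hz a le_rfl hax hane
      omega
    obtain ⟨z0, haz0, hz0x, hfz0⟩ := aux_between hax (finrank F ↥x - 1) (by omega) (by omega)
    have hz0ne : z0 ≠ x := by intro he; rw [he] at hfz0; omega
    have hrz0 : r z0 + finrank F ↥(x ⊓ c) = finrank F ↥x - 1 := by
      have := hz z0 haz0 hz0x hz0ne
      omega
    have hrx : r x + finrank F ↥(x ⊓ c) = finrank F ↥x - 1 := by
      have h1 := hr2 hz0x
      omega
    apply hpf
    refine ⟨a, x, lt_of_le_of_ne hax hane, by omega, ?_⟩
    intro z h1 h2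
    have hz1 : a ≤ z := le_of_lt h1
    have hz2 : z ≤ x := le_of_lt h2
    have hfz : finrank F ↥z < finrank F ↥x := Submodule.finrank_lt_finrank_of_lt h2
    have hfz' : finrank F ↥a < finrank F ↥z := Submodule.finrank_lt_finrank_of_lt h1
    have h5 := hz z hz1 hz2 (ne_of_lt h2)
    constructor <;> omega

end

/-- In a prime-free `q`-matroid of rank `ρ` and nullity `ν` on the subspace lattice of an
`n`-dimensional `F_q`-vector space, the number of subspaces with rank-lack `i` and
nullity `j` is `[ρ choose i]_q [ν choose j]_q q^((ρ-i)(ν-j))`. -/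
theorem primeFree_count_ranklack_nullity (F : Type*) [Field F] [Fintype F] (q : ℕ)
    (hq : Fintype.card F = q)
    (V : Type*) [AddCommGroup V] [Module F V] [FiniteDimensional F V]
    (n : ℕ) (hn : Module.finrank F V = n)
    (r : Submodule F V → ℕ)
    (hr1 : ∀ x : Submodule F V, r x ≤ Module.finrank F ↥x)
    (hr2 : Monotone r)
    (hr3 : ∀ x y : Submodule F V, r (x ⊔ y) + r (x ⊓ y) ≤ r x + r y)
    (hpf : ¬∃ a b : Submodule F V, a < b ∧ Module.finrank F ↥b = Module.finrank F ↥a + 2 ∧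
        ∀ x : Submodule F V, a < x → x < b → (r x = r a + 1 ∧ r b = r x))
    (ρ ν : ℕ) (hρ : ρ = r ⊤) (hν : ν = n - ρ) :
    ∀ i j : ℕ, i ≤ ρ → j ≤ ν →
      {x : Submodule F V | r ⊤ - r x = i ∧ Module.finrank F ↥x - r x = j}.ncard =
        gaussBinom q ρ i * gaussBinom q ν j * q ^ ((ρ - i) * (ν - j)) := by
  intro i j hi hj
  obtain ⟨c, hrc, hmax, hstruct⟩ := aux_struct r hr1 hr2 hr3 hpf
  have htop : finrank F (⊤ : Submodule F V) = n := by rw [finrank_top]; exact hn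
  have hρn : r ⊤ + finrank F ↥c = n := by
    have h1 := hstruct ⊤
    rw [top_inf_eq c] at h1
    omega
  have hνc : finrank F ↥c = ν := by omega
  have hset : {x : Submodule F V | r ⊤ - r x = i ∧ finrank F ↥x - r x = j} =
      {x : Submodule F V | finrank F ↥(x ⊓ c) = j ∧ finrank F (x.map c.mkQ) = ρ - i} := by
    ext x
    have h1 := hstruct x
    have h2 := aux_rn c x
    have h3 : r x ≤ r ⊤ := hr2 le_top
    simp only [Set.mem_setOf_eq]
    omega
  rw [hset]
  have hncard : {x : Submodule F V | finrank F ↥(x ⊓ c) = j ∧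
      finrank F (x.map c.mkQ) = ρ - i}.ncard =
      Nat.card {x : Submodule F V // finrank F ↥(x ⊓ c) = j ∧
        finrank F (x.map c.mkQ) = ρ - i} := (Nat.card_coe_set_eq _).symm
  rw [hncard, aux_count_fiber c j (ρ - i) (fun a ha b => aux_lift_count c a ha b)]
  have hAcard : Nat.card {a : Submodule F V // a ≤ c ∧ finrank F ↥a = j} =
      gaussBinom q ν j := by
    have e : {a : Submodule F V // a ≤ c ∧ finrank F ↥a = j} ≃
        {a' : Submodule F ↥c // finrank F ↥a' = j} :=
      { toFun := fun a => ⟨a.1.comap c.subtype, by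
          rw [(Submodule.comapSubtypeEquivOfLe a.2.1).finrank_eq]; exact a.2.2⟩
        invFun := fun a' => ⟨a'.1.map c.subtype, Submodule.map_subtype_le c a'.1, by
          rw [Submodule.finrank_map_subtype_eq]; exact a'.2⟩
        left_inv := fun a => by
          apply Subtype.ext
          show map c.subtype (comap c.subtype a.1) = a.1
          rw [map_comap_subtype, inf_eq_right.2 a.2.1]
        right_inv := fun a' => Subtype.ext
          (Submodule.comap_map_eq_of_injective (Submodule.injective_subtype c) a'.1) }
    rw [Nat.card_congr e, aux_grass ν ↥c _ _ inferInstance hνc j, hq]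
  have hqV : finrank F (V ⧸ c) = ρ := by
    have := Submodule.finrank_quotient_add_finrank c
    omega
  have hBcard : Nat.card {b : Submodule F (V ⧸ c) // finrank F ↥b = ρ - i} =
      gaussBinom q ρ (ρ - i) := by
    rw [aux_grass ρ (V ⧸ c) _ _ inferInstance hqV (ρ - i), hq]
  rw [hAcard, hBcard, hq, hνc, gb_symm q ρ i hi]
  ring
end

section
/- Let M be a matroid on the Boolean lattice of subsets of a finite set, and let [x, y] be an interval. Then the minor M([x,y]) has exactly one basis if and only if the interval [x,y] is prime-free: it contains no length-2 interval [a, a∪{e,f}] in which both covers from the bottom have weight 1 and both covers to the top have weight 0. -/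
/-!
Write `r z + |x| = r x + |z|` for "`z \ x` is independent in the contraction of `M` by `x`"; then
the bases of `M([x,y])` are the independent `z ∈ [x, y]` spanning `y`, and every independent set
inside `y` augments to one.

If `M([x,y])` has two bases `z ≠ z'`, pick `e ∈ z \ z'`; basis exchange gives `f ∈ z'` with
`z - e + f` independent, and `[z - e, z + f]` is a prime diamond. Conversely, given a prime diamond
`[a, a + e + f]` in `[x, y]`, a basis `i` of `[x, a]` stays independent after adding `e` or `f`
(submodularity against `a`); extending `i + e` and `i + f` to bases of `M([x,y])`, uniqueness
puts `i + e + f` inside one basis, so it is independent of rank `r a + 2`, whereas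
`r (a + e + f) = r a + 1`.
-/

namespace MatroidRank

open Finset

variable {α : Type*} [DecidableEq α] {r : Finset α → ℕ}

theorem eq_insert_or_eq_insert_of_ssubset_of_ssubset {a c : Finset α} {e f : α}
    (hac : a ⊂ c) (hcb : c ⊂ insert e (insert f a)) : c = insert e a ∨ c = insert f a := by
  obtain ⟨g, hgc, hga⟩ := exists_of_ssubset hac
  have hc : c = insert g a := by
    refine (insert_subset hgc hac.subset).antisymm' fun h hhc => ?_
    by_contra hh
    refine hcb.not_subset fun k hk => ?_
    have := hcb.subset hgc
    have := hcb.subset hhc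
    grind
  have := hcb.subset hgc
  grind

theorem rank_insert_le (hle_card : ∀ x : Finset α, r x ≤ x.card)
    (hsubmod : ∀ x y : Finset α, r (x ∪ y) + r (x ∩ y) ≤ r x + r y) (z : Finset α) (e : α) :
    r (insert e z) ≤ r z + 1 := by
  have hsingle : r {e} ≤ 1 := by simpa using hle_card {e}
  have := hsubmod {e} z
  rw [← insert_eq] at this
  omega

theorem rank_union_le_add_card (hle_card : ∀ x : Finset α, r x ≤ x.card)
    (hsubmod : ∀ x y : Finset α, r (x ∪ y) + r (x ∩ y) ≤ r x + r y) (z s : Finset α) :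
    r (z ∪ s) ≤ r z + s.card := by
  induction s using Finset.induction_on with
  | empty => simp
  | insert e s he ih =>
    rw [union_insert, card_insert_of_notMem he]
    have := rank_insert_le hle_card hsubmod (z ∪ s) e
    omega

theorem indep_of_subset (hle_card : ∀ x : Finset α, r x ≤ x.card)
    (hsubmod : ∀ x y : Finset α, r (x ∪ y) + r (x ∩ y) ≤ r x + r y) {x w z : Finset α}
    (hxw : x ⊆ w) (hwz : w ⊆ z) (hz : r z + x.card = r x + z.card) :
    r w + x.card = r x + w.card := by
  have hzw := rank_union_le_add_card hle_card hsubmod w (z \ w)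
  have hwx := rank_union_le_add_card hle_card hsubmod x (w \ x)
  rw [union_sdiff_of_subset hwz] at hzw
  rw [union_sdiff_of_subset hxw] at hwx
  have := card_sdiff_add_card_eq_card hwz
  have := card_sdiff_add_card_eq_card hxw
  omega

theorem rank_union_eq_of_forall_rank_insert_eq (hmono : ∀ x y : Finset α, x ⊆ y → r x ≤ r y)
    (hsubmod : ∀ x y : Finset α, r (x ∪ y) + r (x ∩ y) ≤ r x + r y) {z s : Finset α}
    (hs : ∀ e ∈ s, r (insert e z) = r z) : r (z ∪ s) = r z := by
  induction s using Finset.induction_on with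
  | empty => simp
  | insert e s he ih =>
    have ih := ih fun e' he' => hs e' (mem_insert_of_mem he')
    have hunion : (z ∪ s) ∪ insert e z = z ∪ insert e s := by grind
    have hinter : (z ∪ s) ∩ insert e z = z := by grind
    have := hsubmod (z ∪ s) (insert e z)
    rw [hunion, hinter, hs e (mem_insert_self e s), ih] at this
    have := hmono z (z ∪ insert e s) subset_union_left
    omega

theorem exists_mem_rank_insert_eq_succ (hle_card : ∀ x : Finset α, r x ≤ x.card)
    (hmono : ∀ x y : Finset α, x ⊆ y → r x ≤ r y)
    (hsubmod : ∀ x y : Finset α, r (x ∪ y) + r (x ∩ y) ≤ r x + r y) {z s : Finset α}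
    (hlt : r z < r (z ∪ s)) : ∃ e ∈ s, e ∉ z ∧ r (insert e z) = r z + 1 := by
  obtain ⟨e, hes, hne⟩ : ∃ e ∈ s, r (insert e z) ≠ r z := by
    by_contra! h
    exact hlt.ne' (rank_union_eq_of_forall_rank_insert_eq hmono hsubmod h)
  refine ⟨e, hes, fun hez => hne (by rw [insert_eq_of_mem hez]), ?_⟩
  have := rank_insert_le hle_card hsubmod z e
  have := hmono z (insert e z) (subset_insert e z)
  omega

theorem exists_indep_superset_rank_eq (hle_card : ∀ x : Finset α, r x ≤ x.card)
    (hmono : ∀ x y : Finset α, x ⊆ y → r x ≤ r y)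
    (hsubmod : ∀ x y : Finset α, r (x ∪ y) + r (x ∩ y) ≤ r x + r y) {x z Y : Finset α}
    (hzY : z ⊆ Y) (hz : r z + x.card = r x + z.card) :
    ∃ z', z ⊆ z' ∧ z' ⊆ Y ∧ r z' + x.card = r x + z'.card ∧ r z' = r Y := by
  obtain hrz | hrz := (hmono z Y hzY).eq_or_lt
  · exact ⟨z, subset_rfl, hzY, hz, hrz⟩
  rw [← union_eq_right.mpr hzY] at hrz
  obtain ⟨e, heY, hez, he⟩ := exists_mem_rank_insert_eq_succ hle_card hmono hsubmod hrz
  obtain ⟨z', hzz', hz'Y, hz', hrz'⟩ := exists_indep_superset_rank_eq hle_card hmono hsubmod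
    (x := x) (insert_subset heY hzY) (by rw [he, card_insert_of_notMem hez]; omega)
  exact ⟨z', (subset_insert e z).trans hzz', hz'Y, hz', hrz'⟩
termination_by (Y \ z).card
decreasing_by
  rw [sdiff_insert]
  exact card_erase_lt_of_mem (mem_sdiff.mpr ⟨heY, hez⟩)


theorem rank_insert_add_le_of_subset (hmono : ∀ x y : Finset α, x ⊆ y → r x ≤ r y)
    (hsubmod : ∀ x y : Finset α, r (x ∪ y) + r (x ∩ y) ≤ r x + r y) {i a : Finset α}
    (e : α) (hia : i ⊆ a) : r (insert e a) + r i ≤ r a + r (insert e i) := by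
  have := hsubmod a (insert e i)
  rw [union_insert, union_eq_left.mpr hia] at this
  have := hmono i (a ∩ insert e i) (subset_inter hia (subset_insert e i))
  omega

def IsMinorBasis (r : Finset α → ℕ) (x y z : Finset α) : Prop :=
  x ⊆ z ∧ z ⊆ y ∧ r z + x.card = r x + z.card ∧ r z = r y

def IsPrimeDiamond (r : Finset α → ℕ) (a b : Finset α) : Prop :=
  a ⊆ b ∧ b.card = a.card + 2 ∧ ∀ c : Finset α, a ⊂ c → c ⊂ b → (r c = r a + 1 ∧ r b = r c)

theorem exists_isMinorBasis (hle_card : ∀ x : Finset α, r x ≤ x.card)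
    (hmono : ∀ x y : Finset α, x ⊆ y → r x ≤ r y)
    (hsubmod : ∀ x y : Finset α, r (x ∪ y) + r (x ∩ y) ≤ r x + r y) {x y : Finset α}
    (hxy : x ⊆ y) : ∃ z, IsMinorBasis r x y z :=
  let ⟨z, hxz, hzy, hz, hrz⟩ := exists_indep_superset_rank_eq hle_card hmono hsubmod hxy rfl
  ⟨z, hxz, hzy, hz, hrz⟩

theorem not_isPrimeDiamond_of_existsUnique (hle_card : ∀ x : Finset α, r x ≤ x.card)
    (hmono : ∀ x y : Finset α, x ⊆ y → r x ≤ r y)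
    (hsubmod : ∀ x y : Finset α, r (x ∪ y) + r (x ∩ y) ≤ r x + r y) {x y a b : Finset α}
    (huniq : ∃! z, IsMinorBasis r x y z) (hxa : x ⊆ a) (hby : b ⊆ y) :
    ¬IsPrimeDiamond r a b := by
  rintro ⟨hab, hcard, hdiamond⟩
  obtain ⟨e, f, hef, hba⟩ := card_eq_two.mp <| by
    have := card_sdiff_add_card_eq_card hab
    show (b \ a).card = 2
    omega
  have hmid : ∀ g ∈ b \ a, a ⊂ insert g a ∧ insert g a ⊂ b := by
    intro g hg
    obtain ⟨hgb, hga⟩ := mem_sdiff.mp hg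
    refine ⟨ssubset_insert hga, (insert_subset hgb hab).ssubset_of_ne fun h => ?_⟩
    have := congrArg card h
    rw [card_insert_of_notMem hga] at this
    omega
  obtain ⟨i, hxi, hia, hi, hri⟩ := exists_indep_superset_rank_eq hle_card hmono hsubmod hxa rfl
  have hext : ∀ g ∈ b \ a, ∃ z, IsMinorBasis r x y z ∧ insert g i ⊆ z := by
    intro g hg
    obtain ⟨hgb, hga⟩ := mem_sdiff.mp hg
    have hrg : r (insert g i) = r i + 1 := by
      have := rank_insert_add_le_of_subset hmono hsubmod g hia
      have := (hdiamond _ (hmid g hg).1 (hmid g hg).2).1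
      have := rank_insert_le hle_card hsubmod i g
      omega
    obtain ⟨z, hgz, hzy, hz, hrz⟩ := exists_indep_superset_rank_eq hle_card hmono hsubmod
      (x := x) (insert_subset (hby hgb) (hia.trans (hab.trans hby)))
      (by rw [hrg, card_insert_of_notMem fun h => hga (hia h)]; omega)
    exact ⟨z, ⟨hxi.trans ((subset_insert g i).trans hgz), hzy, hz, hrz⟩, hgz⟩
  have he : e ∈ b \ a := by simp [hba]
  have hf : f ∈ b \ a := by simp [hba]
  obtain ⟨z, hz, hez⟩ := hext e he
  obtain ⟨z', hz', hfz'⟩ := hext f hf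
  rw [huniq.unique hz' hz] at hfz'
  have hwz : insert e (insert f i) ⊆ z :=
    insert_subset (hez (mem_insert_self e i)) (insert_subset (hfz' (mem_insert_self f i))
      ((subset_insert e i).trans hez))
  have hw := indep_of_subset hle_card hsubmod
    (hxi.trans ((subset_insert f i).trans (subset_insert e _))) hwz hz.2.2.1
  have hwcard : (insert e (insert f i)).card = i.card + 2 := by
    have hei : e ∉ i := fun h => (mem_sdiff.mp he).2 (hia h)
    have hfi : f ∉ i := fun h => (mem_sdiff.mp hf).2 (hia h)
    rw [card_insert_of_notMem (by simp [hef, hei]), card_insert_of_notMem hfi]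
  have hwb := hmono _ _ (insert_subset (mem_sdiff.mp he).1
    (insert_subset (mem_sdiff.mp hf).1 (hia.trans hab)))
  have hrb := hdiamond _ (hmid e he).1 (hmid e he).2
  omega

theorem exists_isPrimeDiamond_of_ne (hle_card : ∀ x : Finset α, r x ≤ x.card)
    (hmono : ∀ x y : Finset α, x ⊆ y → r x ≤ r y)
    (hsubmod : ∀ x y : Finset α, r (x ∪ y) + r (x ∩ y) ≤ r x + r y) {x y z z' : Finset α}
    (hz : IsMinorBasis r x y z) (hz' : IsMinorBasis r x y z') (hne : z ≠ z') :
    ∃ a b, x ⊆ a ∧ b ⊆ y ∧ IsPrimeDiamond r a b := by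
  obtain ⟨hxz, hzy, hz, hrz⟩ := hz
  obtain ⟨hxz', hz'y, hz', hrz'⟩ := hz'
  obtain ⟨e, hez, hez'⟩ : ∃ e ∈ z, e ∉ z' := by
    by_contra! h
    exact hne (eq_of_subset_of_card_le h (by omega))
  obtain ⟨a, hea, rfl⟩ : ∃ a, e ∉ a ∧ insert e a = z :=
    ⟨z.erase e, notMem_erase e z, insert_erase hez⟩
  have hxa : x ⊆ a := (subset_insert_iff_of_notMem fun hex => hez' (hxz' hex)).mp hxz
  have ha := indep_of_subset hle_card hsubmod hxa (subset_insert e a) hz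
  rw [card_insert_of_notMem hea] at hz
  obtain ⟨f, hfz', hfa, hrf⟩ := exists_mem_rank_insert_eq_succ hle_card hmono hsubmod
    (z := a) (s := z') (by have := hmono z' (a ∪ z') subset_union_right; omega)
  have hfe : f ≠ e := fun hfe => hez' (hfe ▸ hfz')
  have hby : insert f (insert e a) ⊆ y := insert_subset (hz'y hfz') hzy
  have hrb : r (insert f (insert e a)) = r (insert e a) :=
    le_antisymm (by have := hmono _ _ hby; omega) (hmono _ _ (subset_insert _ _))
  refine ⟨a, insert f (insert e a), hxa, hby, (subset_insert e a).trans (subset_insert _ _), ?_,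
    fun c hac hcb => ?_⟩
  · rw [card_insert_of_notMem (by simp [hfe, hfa]), card_insert_of_notMem hea]
  obtain rfl | rfl := eq_insert_or_eq_insert_of_ssubset_of_ssubset hac hcb <;> omega

end MatroidRank

open MatroidRank in
theorem minor_unique_basis_iff_primeFree_general {α : Type*} [DecidableEq α]
    (r : Finset α → ℕ)
    (hr1 : ∀ x : Finset α, r x ≤ x.card)
    (hr2 : ∀ x y : Finset α, x ⊆ y → r x ≤ r y)
    (hr3 : ∀ x y : Finset α, r (x ∪ y) + r (x ∩ y) ≤ r x + r y)
    (x y : Finset α) (hxy : x ⊆ y) :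
    (∃! z : Finset α, x ⊆ z ∧ z ⊆ y ∧ r z + x.card = r x + z.card ∧ r z = r y) ↔
      ¬∃ a b : Finset α, x ⊆ a ∧ a ⊆ b ∧ b ⊆ y ∧ b.card = a.card + 2 ∧
        ∀ c : Finset α, a ⊂ c → c ⊂ b → (r c = r a + 1 ∧ r b = r c) := by
  constructor
  · rintro huniq ⟨a, b, hxa, hab, hby, hdiamond⟩
    exact not_isPrimeDiamond_of_existsUnique hr1 hr2 hr3 huniq hxa hby ⟨hab, hdiamond⟩
  · intro hfree
    obtain ⟨z, hz⟩ := exists_isMinorBasis hr1 hr2 hr3 hxy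
    refine ⟨z, hz, fun z' hz' => by_contra fun hne => hfree ?_⟩
    obtain ⟨a, b, hxa, hby, hab, hdiamond⟩ :=
      exists_isPrimeDiamond_of_ne hr1 hr2 hr3 hz hz' (Ne.symm hne)
    exact ⟨a, b, hxa, hab, hby, hdiamond⟩

/-- A minor `M([x,y])` of a matroid has exactly one basis if and only if the interval
`[x,y]` is prime-free. -/
theorem minor_unique_basis_iff_primeFree {α : Type*} [Fintype α] [DecidableEq α]
    (r : Finset α → ℕ)
    (hr1 : ∀ x : Finset α, r x ≤ x.card)
    (hr2 : ∀ x y : Finset α, x ⊆ y → r x ≤ r y)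
    (hr3 : ∀ x y : Finset α, r (x ∪ y) + r (x ∩ y) ≤ r x + r y)
    (x y : Finset α) (hxy : x ⊆ y) :
    (∃! z : Finset α, x ⊆ z ∧ z ⊆ y ∧ r z + x.card = r x + z.card ∧ r z = r y) ↔
      ¬∃ a b : Finset α, x ⊆ a ∧ a ⊆ b ∧ b ⊆ y ∧ b.card = a.card + 2 ∧
        ∀ c : Finset α, a ⊂ c → c ⊂ b → (r c = r a + 1 ∧ r b = r c) :=
  minor_unique_basis_iff_primeFree_general r hr1 hr2 hr3 x y hxy
end
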